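/- arXiv:2002.10140 — 6 statements merged into one kernel-verified Lean document; each statement's English description precedes it below -/
import Mathlib

section
/- If 0 < M₁ < M₂, then the inclusion map ℓ_{∞,M₁}(X*, ℝ^ℓ) → ℓ_{∞,M₂}(X*, ℝ^ℓ) is a compact operator: it maps bounded sets to relatively compact sets. -/
/-- Words over the alphabet `X = {x_0, …, x_m}` (`m+1` letters). -/
abbrev Word (m : ℕ) := List (Fin (m+1))

/-- The ratio `|(c,η)| / (M^{|η|} |η|!)` for a formal power series `c : X* → ℝ^ℓ`,
where `|z| = max_i |z_i|` is the sup-norm on `ℝ^ℓ`. -/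
noncomputable def coefRatio {ℓ m : ℕ} (M : ℝ) (c : Word m → Fin ℓ → ℝ) (η : Word m) : ℝ :=
  ‖c η‖ / (M ^ η.length * (Nat.factorial η.length : ℝ))

/-- Membership in `ℓ_{∞,M}(X*, ℝ^ℓ)`: the ratios are bounded. -/
def memLinf {ℓ m : ℕ} (M : ℝ) (c : Word m → Fin ℓ → ℝ) : Prop :=
  BddAbove (Set.range (coefRatio M c))

/-- The norm `‖c‖_{ℓ_{∞,M}} = sup_η |(c,η)|/(M^{|η|}|η|!)`. -/
noncomputable def wnorm {ℓ m : ℕ} (M : ℝ) (c : Word m → Fin ℓ → ℝ) : ℝ :=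
  ⨆ η : Word m, coefRatio M c η

/-- For `0 < M₁ < M₂` the inclusion `ℓ_{∞,M₁} → ℓ_{∞,M₂}` is a compact
operator: the image of any bounded set is relatively compact, i.e. every sequence taken
from a `‖·‖_{ℓ_{∞,M₁}}`-bounded set has a subsequence converging in `ℓ_{∞,M₂}`. -/
theorem stmt3 {ℓ m : ℕ} (M₁ M₂ : ℝ) (h1 : 0 < M₁) (h12 : M₁ < M₂)
    (S : Set (Word m → Fin ℓ → ℝ)) (B : ℝ)
    (hS : ∀ c ∈ S, memLinf M₁ c ∧ wnorm M₁ c ≤ B)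
    (s : ℕ → (Word m → Fin ℓ → ℝ)) (hs : ∀ j, s j ∈ S) :
    ∃ (φ : ℕ → ℕ) (c : Word m → Fin ℓ → ℝ), StrictMono φ ∧ memLinf M₂ c ∧
      Filter.Tendsto (fun j => wnorm M₂ (s (φ j) - c)) Filter.atTop (nhds 0) := by
  have h2 : 0 < M₂ := h1.trans h12
  have hratio_nonneg : ∀ (M : ℝ), 0 < M → ∀ (c : Word m → Fin ℓ → ℝ) (η : Word m),
      0 ≤ coefRatio M c η := by
    intro M hM c η
    unfold coefRatio
    positivity
  have hB0 : 0 ≤ B := by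
    have h := (hS (s 0) (hs 0)).2
    have h0 : 0 ≤ wnorm M₁ (s 0) := Real.iSup_nonneg (hratio_nonneg M₁ h1 (s 0))
    linarith
  have hD1pos : ∀ n : ℕ, (0:ℝ) < M₁ ^ n * (n.factorial : ℝ) := by
    intro n; positivity
  have hD2pos : ∀ n : ℕ, (0:ℝ) < M₂ ^ n * (n.factorial : ℝ) := by
    intro n; positivity
  -- uniform coefficient bound
  have hbound : ∀ j (η : Word m),
      ‖s j η‖ ≤ B * (M₁ ^ η.length * (η.length.factorial : ℝ)) := by
    intro j η
    obtain ⟨hm, hw⟩ := hS (s j) (hs j)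
    have hr : coefRatio M₁ (s j) η ≤ B := le_trans (le_ciSup hm η) hw
    rw [coefRatio, div_le_iff₀ (hD1pos η.length)] at hr
    exact hr
  -- compactness of the product of closed balls
  have hKc : IsCompact (Set.univ.pi fun η : Word m =>
      Metric.closedBall (0 : Fin ℓ → ℝ)
        (B * (M₁ ^ η.length * (η.length.factorial : ℝ)))) :=
    isCompact_univ_pi fun η => isCompact_closedBall _ _
  have hmem : ∀ j, s j ∈ Set.univ.pi fun η : Word m =>
      Metric.closedBall (0 : Fin ℓ → ℝ)
        (B * (M₁ ^ η.length * (η.length.factorial : ℝ))) := by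
    intro j η _
    simpa [Metric.mem_closedBall, dist_zero_right] using hbound j η
  obtain ⟨c, hc, φ, hφ, htend⟩ := hKc.tendsto_subseq hmem
  have hcbound : ∀ η : Word m, ‖c η‖ ≤ B * (M₁ ^ η.length * (η.length.factorial : ℝ)) := by
    intro η
    have := hc η (Set.mem_univ η)
    simpa [Metric.mem_closedBall, dist_zero_right] using this
  have hM12pow : ∀ n : ℕ, M₁ ^ n ≤ M₂ ^ n := fun n =>
    pow_le_pow_left₀ h1.le h12.le n
  refine ⟨φ, c, hφ, ?_, ?_⟩
  · -- memLinf M₂ c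
    refine ⟨B, ?_⟩
    rintro x ⟨η, rfl⟩
    rw [coefRatio, div_le_iff₀ (hD2pos η.length)]
    calc ‖c η‖ ≤ B * (M₁ ^ η.length * (η.length.factorial : ℝ)) := hcbound η
      _ ≤ B * (M₂ ^ η.length * (η.length.factorial : ℝ)) := by
          have hf : (0:ℝ) ≤ (η.length.factorial : ℝ) := Nat.cast_nonneg _
          exact mul_le_mul_of_nonneg_left
            (mul_le_mul_of_nonneg_right (hM12pow η.length) hf) hB0
  · -- convergence
    have hptw : ∀ η : Word m,
        Filter.Tendsto (fun j => s (φ j) η) Filter.atTop (nhds (c η)) := by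
      intro η
      exact (tendsto_pi_nhds.mp htend) η
    rw [Metric.tendsto_atTop]
    intro ε hε
    set r := M₁ / M₂ with hr_def
    have hr0 : 0 < r := div_pos h1 h2
    have hr1 : r < 1 := (div_lt_one h2).mpr h12
    obtain ⟨N, hN⟩ := exists_pow_lt_of_lt_one
      (show (0:ℝ) < ε / 2 / (2 * B + 1) by positivity) hr1
    -- long words: uniform tail bound
    have hlong : ∀ j (η : Word m), N ≤ η.length →
        coefRatio M₂ (s (φ j) - c) η ≤ ε / 2 := by
      intro j η hn
      set n := η.length
      have hd : ‖(s (φ j) - c) η‖ ≤ 2 * B * (M₁ ^ n * (n.factorial : ℝ)) := by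
        have h₁ := hbound (φ j) η
        have h₂ := hcbound η
        calc ‖(s (φ j) - c) η‖ = ‖s (φ j) η - c η‖ := by rw [Pi.sub_apply]
          _ ≤ ‖s (φ j) η‖ + ‖c η‖ := norm_sub_le _ _
          _ ≤ 2 * B * (M₁ ^ n * (n.factorial : ℝ)) := by nlinarith
      have hkey : r ^ n * M₂ ^ n = M₁ ^ n := by
        rw [hr_def, div_pow, div_mul_cancel₀ _ (pow_ne_zero _ h2.ne')]
      have hstep : coefRatio M₂ (s (φ j) - c) η ≤ 2 * B * r ^ n := by
        rw [coefRatio, div_le_iff₀ (hD2pos n)]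
        calc ‖(s (φ j) - c) η‖ ≤ 2 * B * (M₁ ^ n * (n.factorial : ℝ)) := hd
          _ = 2 * B * r ^ n * (M₂ ^ n * (n.factorial : ℝ)) := by
              rw [← hkey]; ring
      have hpow : r ^ n ≤ r ^ N := pow_le_pow_of_le_one hr0.le hr1.le hn
      have hrN : (0:ℝ) < r ^ N := pow_pos hr0 N
      have : 2 * B * r ^ n ≤ (2 * B + 1) * r ^ N := by nlinarith
      have hfin : (2 * B + 1) * r ^ N < ε / 2 := by
        have h2B : (0:ℝ) < 2 * B + 1 := by linarith
        calc (2 * B + 1) * r ^ N < (2 * B + 1) * (ε / 2 / (2 * B + 1)) := by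
              exact (mul_lt_mul_iff_right₀ h2B).mpr hN
          _ = ε / 2 := by field_simp
      linarith [hstep]
    -- short words: finitely many, pointwise convergence
    have hfinW : {η : Word m | η.length < N}.Finite := List.finite_length_lt _ N
    have hev : ∀ᶠ j in Filter.atTop, ∀ η ∈ {η : Word m | η.length < N},
        coefRatio M₂ (s (φ j) - c) η ≤ ε / 2 := by
      rw [Filter.eventually_all_finite hfinW]
      intro η _
      have htend0 : Filter.Tendsto (fun j => ‖s (φ j) η - c η‖) Filter.atTop (nhds 0) := by
        have := (hptw η).sub (tendsto_const_nhds (x := c η))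
        simpa using this.norm
      have hδ : (0:ℝ) < ε / 2 * (M₂ ^ η.length * (η.length.factorial : ℝ)) := by
        have := hD2pos η.length; positivity
      filter_upwards [htend0.eventually_lt_const hδ] with j hj
      rw [coefRatio, div_le_iff₀ (hD2pos η.length)]
      have : ‖(s (φ j) - c) η‖ = ‖s (φ j) η - c η‖ := by rw [Pi.sub_apply]
      rw [this]
      linarith
    obtain ⟨J, hJ⟩ := Filter.eventually_atTop.mp hev
    refine ⟨J, fun j hj => ?_⟩
    have hall : ∀ η : Word m, coefRatio M₂ (s (φ j) - c) η ≤ ε / 2 := by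
      intro η
      by_cases hlen : η.length < N
      · exact hJ j hj η hlen
      · exact hlong j η (le_of_not_gt hlen)
    have hw_le : wnorm M₂ (s (φ j) - c) ≤ ε / 2 := ciSup_le hall
    have hw_nn : 0 ≤ wnorm M₂ (s (φ j) - c) :=
      Real.iSup_nonneg (hratio_nonneg M₂ h2 _)
    rw [Real.dist_eq, sub_zero, abs_of_nonneg hw_nn]
    linarith
end

section
/- Every sequence (c_j) in ℓ_{∞,M₁}(X*, ℝ^ℓ) bounded in the ‖·‖_{ℓ_{∞,M₁}}-norm has a subsequence that converges in the ‖·‖_{ℓ_{∞,M₂}}-norm for any M₂ > M₁ > 0. -/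
/-- Every sequence in `ℓ_{∞,M₁}(X*,ℝ^ℓ)` bounded in the
for any `M₂ > M₁ > 0`. -/
theorem stmt4 {ℓ m : ℕ} (M₁ M₂ : ℝ) (h1 : 0 < M₁) (h12 : M₁ < M₂)
    (s : ℕ → (Word m → Fin ℓ → ℝ)) (B : ℝ)
    (hs : ∀ j, memLinf M₁ (s j) ∧ wnorm M₁ (s j) ≤ B) :
    ∃ (φ : ℕ → ℕ) (c : Word m → Fin ℓ → ℝ), StrictMono φ ∧ memLinf M₂ c ∧
      Filter.Tendsto (fun j => wnorm M₂ (s (φ j) - c)) Filter.atTop (nhds 0) := by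
  have h2 : (0:ℝ) < M₂ := h1.trans h12
  have hDpos : ∀ (M : ℝ), 0 < M → ∀ η : Word m,
      (0:ℝ) < M ^ η.length * (Nat.factorial η.length : ℝ) := by
    intro M hM η
    positivity
  -- pointwise bound on coefficients
  have hb : ∀ j (η : Word m),
      ‖s j η‖ ≤ B * (M₁ ^ η.length * (Nat.factorial η.length : ℝ)) := by
    intro j η
    have h := le_ciSup (hs j).1 η
    have h' : coefRatio M₁ (s j) η ≤ B := h.trans (hs j).2
    rw [coefRatio, div_le_iff₀ (hDpos M₁ h1 η)] at h'
    linarith [h']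
  have hB0 : (0:ℝ) ≤ B := by
    have := hb 0 ([] : Word m)
    have h0 : (0:ℝ) ≤ ‖s 0 ([] : Word m)‖ := norm_nonneg _
    simp [Nat.factorial] at this
    linarith
  -- compactness argument
  set K : Set (Word m → Fin ℓ → ℝ) :=
    Set.univ.pi fun η => Metric.closedBall (0 : Fin ℓ → ℝ)
      (B * (M₁ ^ η.length * (Nat.factorial η.length : ℝ))) with hKdef
  have hK : IsCompact K :=
    isCompact_univ_pi fun η => isCompact_closedBall _ _
  have hmem : ∀ j, s j ∈ K := by
    intro j
    rw [hKdef, Set.mem_univ_pi]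
    intro η
    rw [Metric.mem_closedBall, dist_zero_right]
    exact hb j η
  obtain ⟨c, hcK, φ, hφ, hconv⟩ := hK.tendsto_subseq hmem
  have hc : ∀ η : Word m,
      ‖c η‖ ≤ B * (M₁ ^ η.length * (Nat.factorial η.length : ℝ)) := by
    intro η
    have := hcK η (Set.mem_univ η)
    rwa [Metric.mem_closedBall, dist_zero_right] at this
  refine ⟨φ, c, hφ, ?_, ?_⟩
  · -- memLinf M₂ c
    refine ⟨B, ?_⟩
    rintro x ⟨η, rfl⟩
    rw [coefRatio, div_le_iff₀ (hDpos M₂ h2 η)]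
    calc ‖c η‖ ≤ B * (M₁ ^ η.length * (Nat.factorial η.length : ℝ)) := hc η
      _ ≤ B * (M₂ ^ η.length * (Nat.factorial η.length : ℝ)) := by
          apply mul_le_mul_of_nonneg_left _ hB0
          apply mul_le_mul_of_nonneg_right _ (by positivity)
          exact pow_le_pow_left₀ h1.le h12.le _
  · -- convergence
    set r : ℝ := M₁ / M₂ with hrdef
    have hr0 : (0:ℝ) ≤ r := by positivity
    have hr1 : r < 1 := (div_lt_one h2).2 h12
    have hpconv : ∀ η : Word m, Filter.Tendsto
        (fun j => ‖s (φ j) η - c η‖) Filter.atTop (nhds 0) := by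
      intro η
      have h1' : Filter.Tendsto (fun j => (s (φ j)) η) Filter.atTop (nhds (c η)) := by
        have := (tendsto_pi_nhds.1 hconv) η
        exact this
      exact (tendsto_iff_norm_sub_tendsto_zero.1 h1')
    rw [Metric.tendsto_atTop]
    intro ε hε
    -- choose N with (2*B+1) * r^N ≤ ε/2
    have hrt : Filter.Tendsto (fun n : ℕ => r ^ n) Filter.atTop (nhds 0) :=
      tendsto_pow_atTop_nhds_zero_of_lt_one hr0 hr1
    have hδ : (0:ℝ) < ε / (2 * (2 * B + 1)) := by positivity
    obtain ⟨N, hN⟩ := (Filter.eventually_atTop.1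
      (hrt.eventually (gt_mem_nhds hδ)))
    have htail : ∀ η : Word m, N ≤ η.length → ∀ j,
        coefRatio M₂ (s (φ j) - c) η ≤ ε / 2 := by
      intro η hη j
      have hdn : ‖(s (φ j) - c) η‖ ≤
          2 * B * (M₁ ^ η.length * (Nat.factorial η.length : ℝ)) := by
        have : (s (φ j) - c) η = s (φ j) η - c η := rfl
        rw [this]
        calc ‖s (φ j) η - c η‖ ≤ ‖s (φ j) η‖ + ‖c η‖ := norm_sub_le _ _
          _ ≤ 2 * B * (M₁ ^ η.length * (Nat.factorial η.length : ℝ)) := by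
              have := hb (φ j) η; have := hc η; linarith
      rw [coefRatio, div_le_iff₀ (hDpos M₂ h2 η)]
      have hrn : r ^ η.length ≤ r ^ N := pow_le_pow_of_le_one hr0 hr1.le hη
      have hrN : r ^ N ≤ ε / (2 * (2 * B + 1)) := (hN N le_rfl).le
      have hkey : 2 * B * (M₁ ^ η.length * (Nat.factorial η.length : ℝ)) ≤
          ε / 2 * (M₂ ^ η.length * (Nat.factorial η.length : ℝ)) := by
        have hM : M₁ ^ η.length = r ^ η.length * M₂ ^ η.length := by
          rw [hrdef, div_pow]
          field_simp
        rw [hM]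
        have hfac : (0:ℝ) < (Nat.factorial η.length : ℝ) := by positivity
        have hM2 : (0:ℝ) < M₂ ^ η.length := by positivity
        have h2B : 2 * B * r ^ η.length ≤ ε / 2 := by
          calc 2 * B * r ^ η.length ≤ (2 * B + 1) * r ^ N := by
                nlinarith [pow_nonneg hr0 η.length, pow_nonneg hr0 N]
            _ ≤ (2 * B + 1) * (ε / (2 * (2 * B + 1))) := by
                apply mul_le_mul_of_nonneg_left hrN (by linarith)
            _ = ε / 2 := by field_simp
        calc 2 * B * (r ^ η.length * M₂ ^ η.length * (Nat.factorial η.length : ℝ))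
            = (2 * B * r ^ η.length) * (M₂ ^ η.length * (Nat.factorial η.length : ℝ)) := by ring
          _ ≤ ε / 2 * (M₂ ^ η.length * (Nat.factorial η.length : ℝ)) :=
              mul_le_mul_of_nonneg_right h2B (mul_pos hM2 hfac).le
      exact hdn.trans hkey
    -- head: finitely many words of small length
    have hSfin : {η : Word m | η.length < N}.Finite := List.finite_length_lt _ _
    have hhead : ∀ᶠ j in Filter.atTop, ∀ η ∈ {η : Word m | η.length < N},
        coefRatio M₂ (s (φ j) - c) η ≤ ε / 2 := by
      rw [Filter.eventually_all_finite hSfin]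
      intro η _
      have hpos : (0:ℝ) < ε / 2 * (M₂ ^ η.length * (Nat.factorial η.length : ℝ)) := by
        have := hDpos M₂ h2 η; positivity
      have := (hpconv η).eventually (ge_mem_nhds hpos)
      filter_upwards [this] with j hj
      rw [coefRatio, div_le_iff₀ (hDpos M₂ h2 η)]
      have : (s (φ j) - c) η = s (φ j) η - c η := rfl
      rw [this]
      exact hj
    obtain ⟨N₀, hN₀⟩ := Filter.eventually_atTop.1 hhead
    refine ⟨N₀, fun j hj => ?_⟩
    have hall : ∀ η : Word m, coefRatio M₂ (s (φ j) - c) η ≤ ε / 2 := by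
      intro η
      by_cases hη : η.length < N
      · exact hN₀ j hj η hη
      · exact htail η (le_of_not_gt hη) j
    have hwle : wnorm M₂ (s (φ j) - c) ≤ ε / 2 := ciSup_le hall
    have hwge : (0:ℝ) ≤ wnorm M₂ (s (φ j) - c) := by
      have hbdd : BddAbove (Set.range (coefRatio M₂ (s (φ j) - c))) := by
        refine ⟨ε / 2, ?_⟩
        rintro x ⟨η, rfl⟩
        exact hall η
      have := le_ciSup hbdd ([] : Word m)
      have h0 : (0:ℝ) ≤ coefRatio M₂ (s (φ j) - c) [] := by
        rw [coefRatio]; positivity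
      exact h0.trans this
    rw [Real.dist_eq, sub_zero, abs_of_nonneg hwge]
    linarith
end

section
/- For any u ∈ L₁^m[0,T], any nonnegative integers r₀,…,r_m, and any 0 ≤ t ≤ T: |E_{x₀^{r₀} ⧢ x₁^{r₁} ⧢ ⋯ ⧢ x_m^{r_m}}[u](t)| ≤ ∏_{j=0}^m U_j(t)^{r_j}/r_j!, where U_j(t) := ∫₀^t |u_j(τ)| dτ (with u₀ ≡ 1, so U₀(t) = t). -/
open MeasureTheory

/-- Extension of an input `u : [0,T] → ℝ^m` by the convention `u₀ ≡ 1`. -/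
noncomputable def uext {m : ℕ} (u : Fin m → ℝ → ℝ) : Fin (m+1) → ℝ → ℝ :=
  Fin.cases (fun _ => (1 : ℝ)) u

/-- Iterated integrals: `E_∅[u](t) = 1` and
`E_{x_i η̄}[u](t) = ∫₀ᵗ u_i(τ) E_{η̄}[u](τ) dτ` (with `u₀ ≡ 1`). -/
noncomputable def E {m : ℕ} (u : Fin m → ℝ → ℝ) : Word m → ℝ → ℝ
  | [] => fun _ => 1
  | i :: η => fun t => ∫ τ in (0 : ℝ)..t, uext u i τ * E u η τ
/-- The shuffle product of two words, as an element of `ℝ⟨X⟩` (represented as a finitely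
supported function `X* →₀ ℝ`), defined by the recursion
`(x_i η) ⧢ (x_j ξ) = x_i (η ⧢ (x_j ξ)) + x_j ((x_i η) ⧢ ξ)` and `η ⧢ ∅ = ∅ ⧢ η = η`. -/
noncomputable def shW {m : ℕ} : Word m → Word m → (Word m →₀ ℝ)
  | [], ξ => Finsupp.single ξ 1
  | η, [] => Finsupp.single η 1
  | a :: η, b :: ξ =>
      Finsupp.mapDomain (List.cons a) (shW η (b :: ξ)) +
      Finsupp.mapDomain (List.cons b) (shW (a :: η) ξ)
  termination_by η ξ => η.length + ξ.length
  decreasing_by all_goals (simp [List.length_cons]; try omega)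

/-- Bilinear extension of the shuffle product to polynomials in `ℝ⟨X⟩`. -/
noncomputable def shP {m : ℕ} (p q : Word m →₀ ℝ) : Word m →₀ ℝ :=
  p.sum fun η a => q.sum fun ξ b => (a * b) • shW η ξ

/-- The iterated shuffle product `x₀^{r₀} ⧢ x₁^{r₁} ⧢ ⋯ ⧢ x_m^{r_m}`. -/
noncomputable def shufflePowers {m : ℕ} (r : Fin (m+1) → ℕ) : Word m →₀ ℝ :=
  (List.ofFn fun j : Fin (m+1) => List.replicate (r j) j).foldr
    (fun w p => shP (Finsupp.single w 1) p) (Finsupp.single ([] : Word m) 1)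

/-- Linear extension of `E` to polynomials: `E_p[u] = Σ_η (p,η) E_η[u]`. -/
noncomputable def Ep {m : ℕ} (p : Word m →₀ ℝ) (u : Fin m → ℝ → ℝ) (t : ℝ) : ℝ :=
  p.sum fun η a => a * E u η t

section Aux

open Set

/-- Product rule for primitives of integrable functions, via Fubini. -/
lemma primitive_mul {f g : ℝ → ℝ} {t : ℝ} (ht : 0 ≤ t)
    (hf : IntegrableOn f (Icc 0 t)) (hg : IntegrableOn g (Icc 0 t)) :
    (∫ τ in (0:ℝ)..t, f τ) * (∫ τ in (0:ℝ)..t, g τ) =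
      ∫ s in (0:ℝ)..t, (f s * (∫ τ in (0:ℝ)..s, g τ) + (∫ τ in (0:ℝ)..s, f τ) * g s) := by
  set F : ℝ → ℝ := fun s => ∫ τ in (0:ℝ)..s, f τ with hF
  set G : ℝ → ℝ := fun s => ∫ τ in (0:ℝ)..s, g τ with hG
  set μ : Measure ℝ := volume.restrict (Ioc (0:ℝ) t) with hμ
  have hfI : Integrable f μ := hf.mono_set Ioc_subset_Icc_self
  have hgI : Integrable g μ := hg.mono_set Ioc_subset_Icc_self
  have hFc : ContinuousOn F (Icc 0 t) := by
    have h := intervalIntegral.continuousOn_primitive_interval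
      (a := 0) (b := t) (f := f) (μ := volume) (by rwa [uIcc_of_le ht])
    rwa [uIcc_of_le ht] at h
  have hGc : ContinuousOn G (Icc 0 t) := by
    have h := intervalIntegral.continuousOn_primitive_interval
      (a := 0) (b := t) (f := g) (μ := volume) (by rwa [uIcc_of_le ht])
    rwa [uIcc_of_le ht] at h
  have hFt : F t = ∫ s, f s ∂μ := by
    simp only [hF, hμ]; exact intervalIntegral.integral_of_le ht
  have hGt : G t = ∫ s, g s ∂μ := by
    simp only [hG, hμ]; exact intervalIntegral.integral_of_le ht
  have hfG : Integrable (fun s => f s * G s) μ :=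
    (hf.mul_continuousOn hGc isCompact_Icc).mono_set Ioc_subset_Icc_self
  have hFg : Integrable (fun s => F s * g s) μ :=
    (hg.continuousOn_mul hFc isCompact_Icc).mono_set Ioc_subset_Icc_self
  -- the kernel
  set k : ℝ → ℝ → ℝ := fun s τ => ({p : ℝ × ℝ | p.1 < p.2}.indicator
      (fun p => f p.1 * g p.2) (s, τ)) with hk
  have hmeas : MeasurableSet {p : ℝ × ℝ | p.1 < p.2} :=
    measurableSet_lt measurable_fst measurable_snd
  have hkint : Integrable (Function.uncurry k) (μ.prod μ) := by
    have : Function.uncurry k =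
        {p : ℝ × ℝ | p.1 < p.2}.indicator (fun p => f p.1 * g p.2) := by
      funext p; cases p; rfl
    rw [this]
    exact (hfI.mul_prod hgI).indicator hmeas
  -- interval integrability on subintervals
  have hfiv : ∀ s ∈ Icc (0:ℝ) t, IntervalIntegrable f volume 0 s := by
    intro s hs
    apply IntegrableOn.intervalIntegrable
    rw [uIcc_of_le hs.1]
    exact hf.mono_set (Icc_subset_Icc le_rfl hs.2)
  have hgiv : ∀ s ∈ Icc (0:ℝ) t, IntervalIntegrable g volume 0 s := by
    intro s hs
    apply IntegrableOn.intervalIntegrable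
    rw [uIcc_of_le hs.1]
    exact hg.mono_set (Icc_subset_Icc le_rfl hs.2)
  -- first computation of the double integral
  have h1 : (∫ s, ∫ τ, k s τ ∂μ ∂μ) = G t * F t - ∫ s, f s * G s ∂μ := by
    have hinner : ∀ s ∈ Ioc (0:ℝ) t, (∫ τ, k s τ ∂μ) = f s * (G t - G s) := by
      intro s hs
      have : (fun τ => k s τ) = fun τ => f s * (Ioi s).indicator g τ := by
        funext τ
        simp only [hk, Set.indicator_apply, Set.mem_setOf_eq, Set.mem_Ioi]
        split <;> simp
      rw [this, integral_const_mul, integral_indicator measurableSet_Ioi, hμ,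
        Measure.restrict_restrict measurableSet_Ioi]
      have hset : Ioi s ∩ Ioc 0 t = Ioc s t := by
        ext x; simp only [mem_inter_iff, mem_Ioi, mem_Ioc]
        constructor
        · rintro ⟨h1, h2, h3⟩; exact ⟨h1, h3⟩
        · rintro ⟨h1, h2⟩; exact ⟨h1, hs.1.trans h1, h2⟩
      rw [hset]
      congr 1
      rw [← intervalIntegral.integral_of_le hs.2, hG]
      rw [← intervalIntegral.integral_interval_sub_left (hgiv t ⟨ht, le_rfl⟩)
        (hgiv s ⟨hs.1.le, hs.2⟩)]
    calc (∫ s, ∫ τ, k s τ ∂μ ∂μ) = ∫ s, f s * (G t - G s) ∂μ := by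
          rw [hμ]
          exact setIntegral_congr_fun measurableSet_Ioc hinner
      _ = (∫ s, (f s * G t - f s * G s) ∂μ) := by simp_rw [mul_sub]
      _ = (∫ s, f s * G t ∂μ) - ∫ s, f s * G s ∂μ := by
          exact integral_sub (hfI.mul_const _) hfG
      _ = G t * F t - ∫ s, f s * G s ∂μ := by
          rw [integral_mul_const, hFt]; ring
  -- second computation, after swapping
  have h2 : (∫ s, ∫ τ, k s τ ∂μ ∂μ) = ∫ τ, F τ * g τ ∂μ := by
    rw [integral_integral_swap hkint]
    have hinner : ∀ τ ∈ Ioc (0:ℝ) t, (∫ s, k s τ ∂μ) = F τ * g τ := by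
      intro τ hτ
      have : (fun s => k s τ) = fun s => ((Iio τ).indicator f s) * g τ := by
        funext s
        simp only [hk, Set.indicator_apply, Set.mem_setOf_eq, Set.mem_Iio]
        split <;> simp
      rw [this, integral_mul_const, integral_indicator measurableSet_Iio, hμ,
        Measure.restrict_restrict measurableSet_Iio]
      have hset : Iio τ ∩ Ioc 0 t = Ioo 0 τ := by
        ext x; simp only [mem_inter_iff, mem_Iio, mem_Ioc, mem_Ioo]
        constructor
        · rintro ⟨h1, h2, h3⟩; exact ⟨h2, h1⟩
        · rintro ⟨h1, h2⟩; exact ⟨h2, h1, (h2.le.trans hτ.2)⟩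
      rw [hset]
      congr 1
      simp only [hF]
      rw [intervalIntegral.integral_of_le hτ.1.le, integral_Ioc_eq_integral_Ioo]
    rw [hμ]
    exact setIntegral_congr_fun measurableSet_Ioc hinner
  have key : G t * F t = (∫ s, f s * G s ∂μ) + ∫ τ, F τ * g τ ∂μ := by
    rw [← h2, h1]; ring
  have hR : (∫ s in (0:ℝ)..t,
        (f s * (∫ τ in (0:ℝ)..s, g τ) + (∫ τ in (0:ℝ)..s, f τ) * g s))
      = (∫ s, f s * G s ∂μ) + ∫ s, F s * g s ∂μ := by
    rw [intervalIntegral.integral_of_le ht, ← hμ]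
    exact integral_add hfG hFg
  calc (∫ τ in (0:ℝ)..t, f τ) * (∫ τ in (0:ℝ)..t, g τ) = F t * G t := rfl
    _ = G t * F t := mul_comm _ _
    _ = (∫ s, f s * G s ∂μ) + ∫ τ, F τ * g τ ∂μ := key
    _ = _ := hR.symm

variable {m : ℕ} {T : ℝ} {u : Fin m → ℝ → ℝ}

lemma uext_integrable (hu : ∀ i, IntegrableOn (u i) (Icc 0 T)) (i : Fin (m+1)) :
    IntegrableOn (uext u i) (Icc 0 T) := by
  induction i using Fin.cases with
  | zero =>
      have : IntegrableOn (fun _ : ℝ => (1:ℝ)) (Icc 0 T) :=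
        integrableOn_const measure_Icc_lt_top.ne
      simpa [uext] using this
  | succ j => simpa [uext] using hu j

lemma E_nil (t : ℝ) : E u [] t = 1 := rfl

lemma E_cons (i : Fin (m+1)) (η : Word m) (t : ℝ) :
    E u (i :: η) t = ∫ τ in (0:ℝ)..t, uext u i τ * E u η τ := rfl

lemma E_contOn (hT : 0 ≤ T) (hu : ∀ i, IntegrableOn (u i) (Icc 0 T)) (η : Word m) :
    ContinuousOn (E u η) (Icc 0 T) := by
  induction η with
  | nil => exact (continuousOn_const : ContinuousOn (fun _ : ℝ => (1:ℝ)) (Icc 0 T))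
  | cons i η ih =>
    have hint : IntegrableOn (fun τ => uext u i τ * E u η τ) (Icc 0 T) :=
      (uext_integrable hu i).mul_continuousOn ih isCompact_Icc
    have h := intervalIntegral.continuousOn_primitive_interval
      (a := (0:ℝ)) (b := T) (μ := volume) (f := fun τ => uext u i τ * E u η τ)
      (by rwa [uIcc_of_le hT])
    rw [uIcc_of_le hT] at h
    exact h

lemma EmulInt (hT : 0 ≤ T) (hu : ∀ i, IntegrableOn (u i) (Icc 0 T))
    (i : Fin (m+1)) (η : Word m) :
    IntegrableOn (fun τ => uext u i τ * E u η τ) (Icc 0 T) :=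
  (uext_integrable hu i).mul_continuousOn (E_contOn hT hu η) isCompact_Icc

lemma Ep_single (η : Word m) (t : ℝ) : Ep (Finsupp.single η (1:ℝ)) u t = E u η t := by
  simp [Ep, Finsupp.sum_single_index]

lemma Ep_add (p q : Word m →₀ ℝ) (t : ℝ) : Ep (p + q) u t = Ep p u t + Ep q u t := by
  unfold Ep
  exact Finsupp.sum_add_index' (fun η => by simp) (fun η b₁ b₂ => by ring)

lemma Ep_smul (c : ℝ) (p : Word m →₀ ℝ) (t : ℝ) : Ep (c • p) u t = c * Ep p u t := by
  unfold Ep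
  rw [Finsupp.sum_smul_index (fun η => by simp), Finsupp.mul_sum]
  exact Finsupp.sum_congr fun η _ => by ring

lemma Ep_finset_sum {ι : Type*} (s : Finset ι) (p : ι → (Word m →₀ ℝ)) (t : ℝ) :
    Ep (∑ i ∈ s, p i) u t = ∑ i ∈ s, Ep (p i) u t := by
  classical
  induction s using Finset.cons_induction with
  | empty => simp [Ep]
  | cons a s ha ih => rw [Finset.sum_cons, Finset.sum_cons, Ep_add, ih]

lemma Ep_contOn (hT : 0 ≤ T) (hu : ∀ i, IntegrableOn (u i) (Icc 0 T)) (q : Word m →₀ ℝ) :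
    ContinuousOn (fun t => Ep q u t) (Icc 0 T) := by
  unfold Ep Finsupp.sum
  exact continuousOn_finset_sum _ fun η _ => continuousOn_const.mul (E_contOn hT hu η)

lemma Ep_mapDomain (hT : 0 ≤ T) (hu : ∀ i, IntegrableOn (u i) (Icc 0 T))
    (a : Fin (m+1)) (q : Word m →₀ ℝ) {t : ℝ} (ht : t ∈ Icc (0:ℝ) T) :
    Ep (Finsupp.mapDomain (List.cons a) q) u t
      = ∫ τ in (0:ℝ)..t, uext u a τ * Ep q u τ := by
  unfold Ep
  rw [Finsupp.sum_mapDomain_index (fun η => by simp) (fun η b₁ b₂ => by ring)]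
  show (∑ η ∈ q.support, q η * E u (List.cons a η) t) = _
  calc (∑ η ∈ q.support, q η * E u (a :: η) t)
      = ∑ η ∈ q.support, ∫ τ in (0:ℝ)..t, q η * (uext u a τ * E u η τ) := by
        refine Finset.sum_congr rfl fun η _ => ?_
        rw [E_cons, ← intervalIntegral.integral_const_mul]
    _ = ∫ τ in (0:ℝ)..t, ∑ η ∈ q.support, q η * (uext u a τ * E u η τ) := by
        rw [intervalIntegral.integral_finset_sum]
        intro η _
        apply IntervalIntegrable.const_mul
        apply IntegrableOn.intervalIntegrable
        rw [uIcc_of_le ht.1]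
        exact (EmulInt hT hu a η).mono_set (Icc_subset_Icc le_rfl ht.2)
    _ = ∫ τ in (0:ℝ)..t, uext u a τ * Ep q u τ := by
        refine intervalIntegral.integral_congr fun τ _ => ?_
        unfold Ep Finsupp.sum
        rw [Finset.mul_sum]
        exact Finset.sum_congr rfl fun η _ => by ring

lemma EpmulInt (hT : 0 ≤ T) (hu : ∀ i, IntegrableOn (u i) (Icc 0 T))
    (i : Fin (m+1)) (q : Word m →₀ ℝ) :
    IntegrableOn (fun τ => uext u i τ * Ep q u τ) (Icc 0 T) :=
  (uext_integrable hu i).mul_continuousOn (Ep_contOn hT hu q) isCompact_Icc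

lemma shuffle_id (hT : 0 ≤ T) (hu : ∀ i, IntegrableOn (u i) (Icc 0 T)) :
    ∀ (n : ℕ) (η ξ : Word m), η.length + ξ.length ≤ n →
      ∀ t ∈ Icc (0:ℝ) T, Ep (shW η ξ) u t = E u η t * E u ξ t := by
  intro n
  induction n with
  | zero =>
    intro η ξ hlen t ht
    have hη : η = [] := by cases η with | nil => rfl | cons a l => simp at hlen
    have hξ : ξ = [] := by cases ξ with | nil => rfl | cons a l => subst hη; simp at hlen
    subst hη; subst hξ
    simp [shW, Ep_single, E_nil]
  | succ n ih =>
    intro η ξ hlen t ht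
    match η, ξ with
    | [], ξ => simp [shW, Ep_single, E_nil]
    | a :: η, [] =>
      rw [show shW (a :: η) ([] : Word m) = Finsupp.single (a :: η) 1 from by simp [shW]]
      simp [Ep_single, E_nil]
    | a :: η, b :: ξ =>
      have hsub : Icc (0:ℝ) t ⊆ Icc 0 T := Icc_subset_Icc le_rfl ht.2
      have lenh1 : η.length + (b :: ξ).length ≤ n := by
        simp only [List.length_cons] at hlen ⊢; omega
      have lenh2 : (a :: η).length + ξ.length ≤ n := by
        simp only [List.length_cons] at hlen ⊢; omega
      rw [show shW (a :: η) (b :: ξ) =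
          Finsupp.mapDomain (List.cons a) (shW η (b :: ξ)) +
          Finsupp.mapDomain (List.cons b) (shW (a :: η) ξ) from by rw [shW]]
      rw [Ep_add, Ep_mapDomain hT hu a _ ht, Ep_mapDomain hT hu b _ ht]
      have e1 : (∫ τ in (0:ℝ)..t, uext u a τ * Ep (shW η (b :: ξ)) u τ)
          = ∫ τ in (0:ℝ)..t, ((uext u a τ * E u η τ) * E u (b :: ξ) τ) := by
        refine intervalIntegral.integral_congr fun τ hτ => ?_
        rw [uIcc_of_le ht.1] at hτ
        rw [ih η (b :: ξ) lenh1 τ (hsub hτ)]; ring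
      have e2 : (∫ τ in (0:ℝ)..t, uext u b τ * Ep (shW (a :: η) ξ) u τ)
          = ∫ τ in (0:ℝ)..t, (E u (a :: η) τ * (uext u b τ * E u ξ τ)) := by
        refine intervalIntegral.integral_congr fun τ hτ => ?_
        rw [uIcc_of_le ht.1] at hτ
        rw [ih (a :: η) ξ lenh2 τ (hsub hτ)]; ring
      rw [e1, e2]
      have int1 : IntervalIntegrable
          (fun τ => (uext u a τ * E u η τ) * E u (b :: ξ) τ) volume 0 t := by
        apply IntegrableOn.intervalIntegrable
        rw [uIcc_of_le ht.1]
        exact ((EmulInt hT hu a η).mul_continuousOn (E_contOn hT hu (b :: ξ))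
          isCompact_Icc).mono_set hsub
      have int2 : IntervalIntegrable
          (fun τ => E u (a :: η) τ * (uext u b τ * E u ξ τ)) volume 0 t := by
        apply IntegrableOn.intervalIntegrable
        rw [uIcc_of_le ht.1]
        exact ((EmulInt hT hu b ξ).continuousOn_mul (E_contOn hT hu (a :: η))
          isCompact_Icc).mono_set hsub
      rw [← intervalIntegral.integral_add int1 int2]
      rw [E_cons a η t, E_cons b ξ t]
      rw [primitive_mul ht.1 ((EmulInt hT hu a η).mono_set hsub)
        ((EmulInt hT hu b ξ).mono_set hsub)]
      refine intervalIntegral.integral_congr fun s hs => ?_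
      rw [E_cons b ξ s, E_cons a η s]

lemma shW_rep (j : Fin (m+1)) : ∀ r : ℕ, shW (List.replicate r j) [j]
    = ((r : ℝ) + 1) • Finsupp.single (List.replicate (r+1) j) 1 := by
  intro r
  induction r with
  | zero => simp [shW]
  | succ r ih =>
    have step : shW (j :: List.replicate r j) [j]
        = Finsupp.mapDomain (List.cons j) (shW (List.replicate r j) [j]) +
          Finsupp.single (j :: j :: List.replicate r j) 1 := by
      simp [shW]
    rw [show List.replicate (r+1) j = j :: List.replicate r j from rfl, step, ih]
    rw [Finsupp.mapDomain_smul, Finsupp.mapDomain_single]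
    rw [show (List.replicate (r+1+1) j) = j :: j :: List.replicate r j from rfl]
    rw [show (List.replicate (r+1) j) = j :: List.replicate r j from rfl]
    push_cast
    module

lemma E_rep (hT : 0 ≤ T) (hu : ∀ i, IntegrableOn (u i) (Icc 0 T)) (j : Fin (m+1)) :
    ∀ r : ℕ, ∀ t ∈ Icc (0:ℝ) T,
      E u (List.replicate r j) t
        = (∫ τ in (0:ℝ)..t, uext u j τ) ^ r / (Nat.factorial r : ℝ) := by
  intro r
  induction r with
  | zero => intro t ht; simp [E_nil]
  | succ r ih =>
    intro t ht
    have hid := shuffle_id hT hu (r + 1) (List.replicate r j) [j] (by simp) t ht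
    rw [shW_rep, Ep_smul, Ep_single] at hid
    have hj : E u [j] t = ∫ τ in (0:ℝ)..t, uext u j τ := by
      rw [E_cons]
      refine intervalIntegral.integral_congr fun τ _ => ?_
      rw [E_nil, mul_one]
    rw [ih t ht, hj] at hid
    set G : ℝ := ∫ τ in (0:ℝ)..t, uext u j τ
    have hr1 : ((r:ℝ) + 1) ≠ 0 := by positivity
    have hrf : ((Nat.factorial r : ℝ)) ≠ 0 := by
      exact_mod_cast Nat.factorial_ne_zero r
    have h2 : E u (List.replicate (r+1) j) t = (G ^ r / (Nat.factorial r : ℝ) * G) / ((r:ℝ)+1) := by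
      rw [eq_div_iff hr1, mul_comm]
      exact hid
    have hfe : (((r+1).factorial : ℕ) : ℝ) = ((r:ℝ)+1) * (Nat.factorial r : ℝ) := by
      rw [Nat.factorial_succ]; push_cast; ring
    rw [h2, hfe, pow_succ, div_mul_eq_mul_div, div_div,
      mul_comm (Nat.factorial r : ℝ) ((r:ℝ)+1)]

lemma Ep_shP_single (hT : 0 ≤ T) (hu : ∀ i, IntegrableOn (u i) (Icc 0 T))
    (w : Word m) (P : Word m →₀ ℝ) {t : ℝ} (ht : t ∈ Icc (0:ℝ) T) :
    Ep (shP (Finsupp.single w 1) P) u t = E u w t * Ep P u t := by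
  unfold shP
  rw [Finsupp.sum_single_index (by simp)]
  show Ep (∑ ξ ∈ P.support, ((1 : ℝ) * P ξ) • shW w ξ) u t = _
  rw [Ep_finset_sum]
  rw [Finset.sum_congr rfl (fun ξ hξ => by
    rw [Ep_smul, one_mul, shuffle_id hT hu (w.length + ξ.length) w ξ le_rfl t ht])]
  unfold Ep Finsupp.sum
  rw [Finset.mul_sum]
  exact Finset.sum_congr rfl fun ξ _ => by ring

lemma Ep_foldr (hT : 0 ≤ T) (hu : ∀ i, IntegrableOn (u i) (Icc 0 T)) :
    ∀ L : List (Word m), ∀ t ∈ Icc (0:ℝ) T,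
      Ep (L.foldr (fun w p => shP (Finsupp.single w 1) p)
          (Finsupp.single ([] : Word m) 1)) u t
        = (L.map fun w => E u w t).prod := by
  intro L
  induction L with
  | nil => intro t ht; simp [Ep_single, E_nil]
  | cons w L ih =>
    intro t ht
    simp only [List.foldr_cons, List.map_cons, List.prod_cons]
    rw [Ep_shP_single hT hu w _ ht, ih t ht]

end Aux

/-- For `u ∈ L₁^m[0,T]`, nonnegative integers `r₀,…,r_m`, and
`t ∈ [0,T]`: `|E_{x₀^{r₀} ⧢ ⋯ ⧢ x_m^{r_m}}[u](t)| ≤ ∏_j U_j(t)^{r_j}/r_j!`,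
where `U_j(t) = ∫₀ᵗ |u_j|` (and `u₀ ≡ 1`, so `U₀(t) = t`). -/
theorem stmt8 {m : ℕ} (T : ℝ) (hT : 0 ≤ T) (u : Fin m → ℝ → ℝ)
    (hu : ∀ i, MeasureTheory.IntegrableOn (u i) (Set.Icc 0 T))
    (r : Fin (m+1) → ℕ) (t : ℝ) (ht : t ∈ Set.Icc 0 T) :
    |Ep (shufflePowers r) u t| ≤
      ∏ j : Fin (m+1), (∫ τ in (0 : ℝ)..t, |uext u j τ|) ^ (r j) /
        (Nat.factorial (r j) : ℝ) := by
  have key : Ep (shufflePowers r) u t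
      = ∏ j : Fin (m+1), (∫ τ in (0:ℝ)..t, uext u j τ) ^ (r j) /
          (Nat.factorial (r j) : ℝ) := by
    unfold shufflePowers
    rw [Ep_foldr hT hu _ t ht, List.map_ofFn, List.prod_ofFn]
    refine Finset.prod_congr rfl fun j _ => ?_
    simp only [Function.comp]
    rw [E_rep hT hu j (r j) t ht]
  rw [key, Finset.abs_prod]
  refine Finset.prod_le_prod (fun j _ => abs_nonneg _) (fun j _ => ?_)
  rw [abs_div, abs_pow, Nat.abs_cast]
  have habs : |∫ τ in (0:ℝ)..t, uext u j τ| ≤ ∫ τ in (0:ℝ)..t, |uext u j τ| :=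
    intervalIntegral.abs_integral_le_integral_abs ht.1
  gcongr
end

section
/- Suppose the coefficients of c satisfy |(c,η)| ≤ K M^{|η|} |η|! for all words η, and u ∈ L₁^m[0,T] satisfies R := max{‖u‖₁, T} with R < 1/(M(m+1)). Then the Chen–Fliess series y(t) = Σ_{η ∈ X*} (c,η) E_η[u](t) converges absolutely and uniformly on [0,T], and |y(t)| ≤ Σ_{k=0}^∞ K (MR(m+1))^k = K/(1 − MR(m+1)) for all t ∈ [0,T]. -/
open MeasureTheory

section Stmt10Aux

variable {T : ℝ}

private lemma intInt_of_mem {f : ℝ → ℝ} (hf : IntegrableOn f (Set.Icc 0 T))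
    {t : ℝ} (ht : t ∈ Set.Icc (0:ℝ) T) : IntervalIntegrable f volume 0 t := by
  have h1 : IntegrableOn f (Set.uIcc 0 t) := by
    rw [Set.uIcc_of_le ht.1]
    exact hf.mono_set (Set.Icc_subset_Icc_right ht.2)
  exact h1.intervalIntegrable

private lemma mul_cont_integrable {g h : ℝ → ℝ} (hg : IntegrableOn g (Set.Icc 0 T))
    (hh : ContinuousOn h (Set.Icc 0 T)) :
    IntegrableOn (fun τ => g τ * h τ) (Set.Icc 0 T) := by
  obtain ⟨C, hC⟩ := isCompact_Icc.exists_bound_of_continuousOn hh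
  refine Integrable.mono' (hg.abs.mul_const C)
    (hg.aestronglyMeasurable.mul (hh.aestronglyMeasurable measurableSet_Icc)) ?_
  filter_upwards [ae_restrict_mem measurableSet_Icc] with τ hτ
  rw [norm_mul]
  have h1 : ‖h τ‖ ≤ C := hC τ hτ
  have := mul_le_mul_of_nonneg_left h1 (norm_nonneg (g τ))
  simpa [abs_mul] using this

private lemma Vcont {f : ℝ → ℝ} (hT : 0 ≤ T) (hf : IntegrableOn f (Set.Icc 0 T)) :
    ContinuousOn (fun x => ∫ s in (0:ℝ)..x, f s) (Set.Icc 0 T) := by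
  have := intervalIntegral.continuousOn_primitive_interval
    (by rwa [Set.uIcc_of_le hT] : IntegrableOn f (Set.uIcc 0 T) volume)
  rwa [Set.uIcc_of_le hT] at this

private lemma gInt {f : ℝ → ℝ} (hT : 0 ≤ T) (hf : IntegrableOn f (Set.Icc 0 T)) (n : ℕ) :
    IntegrableOn (fun τ => f τ * (∫ s in (0:ℝ)..τ, f s) ^ n) (Set.Icc 0 T) :=
  mul_cont_integrable hf ((Vcont hT hf).pow n)

private lemma key_id {f : ℝ → ℝ} (hT : 0 ≤ T) (hf : IntegrableOn f (Set.Icc 0 T))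
    (n : ℕ) :
    ∀ t ∈ Set.Icc (0:ℝ) T,
      (∫ τ in (0:ℝ)..t, f τ * (∫ s in (0:ℝ)..τ, f s) ^ n)
        = (∫ s in (0:ℝ)..t, f s) ^ (n+1) / (n+1) := by
  set V : ℝ → ℝ := fun x => ∫ s in (0:ℝ)..x, f s with hV
  induction n with
  | zero =>
    intro t ht
    simp
  | succ n ih =>
    intro t ht
    obtain ⟨ht0, htT⟩ := ht
    have hsub : ∀ {x : ℝ}, x ∈ Set.Icc (0:ℝ) t → x ∈ Set.Icc (0:ℝ) T :=
      fun hx => ⟨hx.1, hx.2.trans htT⟩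
    -- interval integrabilities
    have hfi : IntervalIntegrable f volume 0 t := intInt_of_mem hf ⟨ht0, htT⟩
    have hgn : IntervalIntegrable (fun τ => f τ * V τ ^ n) volume 0 t :=
      intInt_of_mem (gInt hT hf n) ⟨ht0, htT⟩
    have hgn1 : IntervalIntegrable (fun τ => f τ * V τ ^ (n+1)) volume 0 t :=
      intInt_of_mem (gInt hT hf (n+1)) ⟨ht0, htT⟩
    -- the remainder integrand
    have hrem : IntervalIntegrable (fun τ => f τ * V τ ^ n * (V t - V τ)) volume 0 t := by
      have : (fun τ => f τ * V τ ^ n * (V t - V τ))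
          = fun τ => (f τ * V τ ^ n) * V t - f τ * V τ ^ (n+1) := by
        funext τ; ring
      rw [this]
      exact (hgn.mul_const (V t)).sub hgn1
    -- main splitting
    have split : (∫ τ in (0:ℝ)..t, f τ * V τ ^ n * V t)
        = (∫ τ in (0:ℝ)..t, f τ * V τ ^ (n+1))
          + ∫ τ in (0:ℝ)..t, f τ * V τ ^ n * (V t - V τ) := by
      rw [← intervalIntegral.integral_add hgn1 hrem]
      congr 1; funext τ; ring
    have hAconst : (∫ τ in (0:ℝ)..t, f τ * V τ ^ n * V t) = V t ^ (n+2) / (n+1) := by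
      rw [intervalIntegral.integral_mul_const, ih t ⟨ht0, htT⟩]
      ring
    -- Fubini on the remainder term
    set g : ℝ → ℝ := fun τ => f τ * V τ ^ n with hg
    have hgIoc : Integrable g (volume.restrict (Set.Ioc 0 t)) :=
      ((gInt hT hf n).mono_set (Set.Icc_subset_Icc_right htT)).mono_set Set.Ioc_subset_Icc_self
    have hfIoc : Integrable f (volume.restrict (Set.Ioc 0 t)) :=
      (hf.mono_set (Set.Icc_subset_Icc_right htT)).mono_set Set.Ioc_subset_Icc_self
    have hprod : Integrable (fun p : ℝ × ℝ => g p.1 * f p.2)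
        ((volume.restrict (Set.Ioc 0 t)).prod (volume.restrict (Set.Ioc 0 t))) :=
      hgIoc.mul_prod hfIoc
    have hindic : Integrable
        ({p : ℝ × ℝ | p.1 < p.2}.indicator (fun p : ℝ × ℝ => g p.1 * f p.2))
        ((volume.restrict (Set.Ioc 0 t)).prod (volume.restrict (Set.Ioc 0 t))) :=
      hprod.indicator (measurableSet_lt measurable_fst measurable_snd)
    have hF : ∀ τ s : ℝ, g τ * (Set.Ioi τ).indicator f s
        = {p : ℝ × ℝ | p.1 < p.2}.indicator (fun p : ℝ × ℝ => g p.1 * f p.2) (τ, s) := by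
      intro τ s
      by_cases h : τ < s
      · simp [Set.indicator_of_mem, h, Set.mem_Ioi]
      · simp [Set.indicator_of_notMem, h, Set.mem_Ioi]
    have huncurry : Integrable (Function.uncurry fun τ s => g τ * (Set.Ioi τ).indicator f s)
        ((volume.restrict (Set.Ioc 0 t)).prod (volume.restrict (Set.Ioc 0 t))) := by
      have : (Function.uncurry fun τ s => g τ * (Set.Ioi τ).indicator f s)
          = {p : ℝ × ℝ | p.1 < p.2}.indicator (fun p : ℝ × ℝ => g p.1 * f p.2) := by
        funext p; exact hF p.1 p.2
      rw [this]; exact hindic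
    have hswap := MeasureTheory.integral_integral_swap huncurry
    -- identify LHS of swap with the remainder
    have hrem_eq : (∫ τ in (0:ℝ)..t, f τ * V τ ^ n * (V t - V τ))
        = ∫ τ in Set.Ioc (0:ℝ) t, ∫ s in Set.Ioc (0:ℝ) t, g τ * (Set.Ioi τ).indicator f s := by
      rw [intervalIntegral.integral_of_le ht0]
      refine MeasureTheory.setIntegral_congr_fun measurableSet_Ioc ?_
      intro τ hτ
      have hτt : τ ≤ t := hτ.2
      have hfτ : IntervalIntegrable f volume 0 τ := intInt_of_mem hf ⟨hτ.1.le, hτt.trans htT⟩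
      have hVt : V t - V τ = ∫ s in τ..t, f s :=
        intervalIntegral.integral_interval_sub_left hfi hfτ
      have hset : Set.Ioc (0:ℝ) t ∩ Set.Ioi τ = Set.Ioc τ t := by
        ext s
        simp only [Set.mem_inter_iff, Set.mem_Ioc, Set.mem_Ioi]
        constructor
        · rintro ⟨⟨_, h2⟩, h3⟩; exact ⟨h3, h2⟩
        · rintro ⟨h1, h2⟩; exact ⟨⟨hτ.1.trans h1, h2⟩, h1⟩
      have hthis : (∫ s in Set.Ioc (0:ℝ) t, (Set.Ioi τ).indicator f s) = ∫ s in τ..t, f s := by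
        rw [MeasureTheory.setIntegral_indicator measurableSet_Ioi, hset,
          intervalIntegral.integral_of_le hτt]
      show f τ * V τ ^ n * (V t - V τ)
        = ∫ s in Set.Ioc (0:ℝ) t, g τ * (Set.Ioi τ).indicator f s
      rw [MeasureTheory.integral_const_mul, hthis, ← hVt, hg]
    -- compute the swapped integral
    have hswap_eq : (∫ s in Set.Ioc (0:ℝ) t, ∫ τ in Set.Ioc (0:ℝ) t, g τ * (Set.Ioi τ).indicator f s)
        = ∫ s in Set.Ioc (0:ℝ) t, f s * (V s ^ (n+1) / (n+1)) := by
      refine MeasureTheory.setIntegral_congr_fun measurableSet_Ioc ?_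
      intro s hs
      have hst : s ≤ t := hs.2
      have h1 : (fun τ => g τ * (Set.Ioi τ).indicator f s)
          = fun τ => f s * (Set.Iio s).indicator g τ := by
        funext τ
        by_cases h : τ < s
        · rw [Set.indicator_of_mem (Set.mem_Ioi.2 h), Set.indicator_of_mem (Set.mem_Iio.2 h)]
          ring
        · rw [Set.indicator_of_notMem (by simpa using h),
            Set.indicator_of_notMem (by simpa using h)]
          ring
      show (∫ τ in Set.Ioc (0:ℝ) t, g τ * (Set.Ioi τ).indicator f s)
        = f s * (V s ^ (n+1) / (↑n + 1))
      rw [h1, MeasureTheory.integral_const_mul]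
      congr 1
      have hset : Set.Ioc (0:ℝ) t ∩ Set.Iio s = Set.Ioo 0 s := by
        ext τ
        simp only [Set.mem_inter_iff, Set.mem_Ioc, Set.mem_Iio, Set.mem_Ioo]
        constructor
        · rintro ⟨⟨h1', _⟩, h3⟩; exact ⟨h1', h3⟩
        · rintro ⟨h1', h2'⟩; exact ⟨⟨h1', (h2'.le.trans hst)⟩, h2'⟩
      have h2 : (∫ τ in Set.Ioc (0:ℝ) t, (Set.Iio s).indicator g τ)
          = ∫ τ in Set.Ioo (0:ℝ) s, g τ := by
        rw [MeasureTheory.setIntegral_indicator measurableSet_Iio, hset]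
      rw [h2, ← MeasureTheory.integral_Ioc_eq_integral_Ioo,
        ← intervalIntegral.integral_of_le hs.1.le]
      exact ih s ⟨hs.1.le, hst.trans htT⟩
    -- put everything together
    have hBval : (∫ τ in (0:ℝ)..t, f τ * V τ ^ n * (V t - V τ))
        = (∫ τ in (0:ℝ)..t, f τ * V τ ^ (n+1)) / (n+1) := by
      rw [hrem_eq, hswap, hswap_eq]
      rw [intervalIntegral.integral_of_le ht0]
      rw [← MeasureTheory.integral_div]
      congr 1
      funext s
      ring
    have hn1 : (0:ℝ) < (n:ℝ) + 1 := by positivity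
    have heq := split
    rw [hAconst, hBval] at heq
    show (∫ τ in (0:ℝ)..t, f τ * V τ ^ (n+1)) = V t ^ (n+1+1) / (↑(n+1) + 1)
    push_cast
    have hn2 : ((n:ℝ) + 1 + 1) ≠ 0 := by positivity
    field_simp at heq ⊢
    nlinarith [heq]


/-- Iterated integrals of the absolute values. -/
noncomputable def AA {m : ℕ} (u : Fin m → ℝ → ℝ) : Word m → ℝ → ℝ
  | [] => fun _ => 1
  | i :: η => fun t => ∫ τ in (0 : ℝ)..t, |uext u i τ| * AA u η τ

variable {m : ℕ} {u : Fin m → ℝ → ℝ} {T : ℝ}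

private lemma uext_int (hT : 0 ≤ T) (hu : ∀ i, IntegrableOn (u i) (Set.Icc 0 T))
    (i : Fin (m+1)) : IntegrableOn (uext u i) (Set.Icc 0 T) := by
  induction i using Fin.cases with
  | zero => simpa [uext] using (integrableOn_const.2 (Or.inr measure_Icc_lt_top))
  | succ i => simpa [uext] using hu i

private lemma uext_abs_int (hT : 0 ≤ T) (hu : ∀ i, IntegrableOn (u i) (Set.Icc 0 T))
    (i : Fin (m+1)) : IntegrableOn (fun τ => |uext u i τ|) (Set.Icc 0 T) :=
  (uext_int hT hu i).abs

/-- Continuity, integrability of integrands, nonnegativity, and monotonicity for `AA`. -/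
private lemma AA_props (hT : 0 ≤ T) (hu : ∀ i, IntegrableOn (u i) (Set.Icc 0 T)) :
    ∀ η : Word m, ContinuousOn (AA u η) (Set.Icc 0 T)
      ∧ (∀ t ∈ Set.Icc (0:ℝ) T, 0 ≤ AA u η t) := by
  intro η
  induction η with
  | nil => exact ⟨continuousOn_const, fun t _ => zero_le_one⟩
  | cons i η ih =>
    have hint : IntegrableOn (fun τ => |uext u i τ| * AA u η τ) (Set.Icc 0 T) :=
      mul_cont_integrable (uext_abs_int hT hu i) ih.1
    constructor
    · have := Vcont hT hint
      exact this
    · intro t ht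
      show 0 ≤ ∫ τ in (0:ℝ)..t, |uext u i τ| * AA u η τ
      refine intervalIntegral.integral_nonneg ht.1 ?_
      intro x hx
      exact mul_nonneg (abs_nonneg _) (ih.2 x ⟨hx.1, hx.2.trans ht.2⟩)

private lemma AA_int (hT : 0 ≤ T) (hu : ∀ i, IntegrableOn (u i) (Set.Icc 0 T))
    (i : Fin (m+1)) (η : Word m) :
    IntegrableOn (fun τ => |uext u i τ| * AA u η τ) (Set.Icc 0 T) :=
  mul_cont_integrable (uext_abs_int hT hu i) (AA_props hT hu η).1

private lemma AA_mono (hT : 0 ≤ T) (hu : ∀ i, IntegrableOn (u i) (Set.Icc 0 T))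
    (η : Word m) {t : ℝ} (ht : t ∈ Set.Icc (0:ℝ) T) : AA u η t ≤ AA u η T := by
  cases η with
  | nil => simp [AA]
  | cons i η =>
    show (∫ τ in (0:ℝ)..t, |uext u i τ| * AA u η τ)
      ≤ ∫ τ in (0:ℝ)..T, |uext u i τ| * AA u η τ
    refine intervalIntegral.integral_mono_interval le_rfl ht.1 ht.2 ?_ ?_
    · filter_upwards [MeasureTheory.ae_restrict_mem measurableSet_Ioc] with x hx
      exact mul_nonneg (abs_nonneg _) ((AA_props hT hu η).2 x ⟨hx.1.le, hx.2⟩)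
    · exact intInt_of_mem (AA_int hT hu i η) ⟨hT, le_rfl⟩

/-- `E` is continuous and dominated by `AA`. -/
private lemma E_props (hT : 0 ≤ T) (hu : ∀ i, IntegrableOn (u i) (Set.Icc 0 T)) :
    ∀ η : Word m, ContinuousOn (E u η) (Set.Icc 0 T)
      ∧ (∀ t ∈ Set.Icc (0:ℝ) T, |E u η t| ≤ AA u η t) := by
  intro η
  induction η with
  | nil => exact ⟨continuousOn_const, fun t _ => by simp [E, AA]⟩
  | cons i η ih =>
    have hintA : IntegrableOn (fun τ => |uext u i τ| * AA u η τ) (Set.Icc 0 T) :=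
      AA_int hT hu i η
    have hintE : IntegrableOn (fun τ => uext u i τ * E u η τ) (Set.Icc 0 T) := by
      refine Integrable.mono' hintA
        ((uext_int hT hu i).aestronglyMeasurable.mul
          (ih.1.aestronglyMeasurable measurableSet_Icc)) ?_
      filter_upwards [MeasureTheory.ae_restrict_mem measurableSet_Icc] with τ hτ
      rw [norm_mul]
      exact mul_le_mul_of_nonneg_left (by simpa using ih.2 τ hτ) (abs_nonneg _) |>.trans
        (le_of_eq (by simp [Real.norm_eq_abs]))
    constructor
    · exact Vcont hT hintE
    · intro t ht
      show |∫ τ in (0:ℝ)..t, uext u i τ * E u η τ| ≤ ∫ τ in (0:ℝ)..t, |uext u i τ| * AA u η τ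
      have h1 : |∫ τ in (0:ℝ)..t, uext u i τ * E u η τ|
          ≤ ∫ τ in (0:ℝ)..t, |uext u i τ * E u η τ| :=
        intervalIntegral.abs_integral_le_integral_abs ht.1
      refine h1.trans ?_
      refine intervalIntegral.integral_mono_on ht.1 ?_ ?_ ?_
      · exact (intInt_of_mem hintE ht).abs
      · exact intInt_of_mem hintA ht
      · intro x hx
        rw [abs_mul]
        exact mul_le_mul_of_nonneg_left (ih.2 x ⟨hx.1, hx.2.trans ht.2⟩) (abs_nonneg _)

end Stmt10Aux

/-- The dominating input `S = Σ_i |u_i|` (including `u₀ ≡ 1`). -/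
private noncomputable def SS {m : ℕ} (u : Fin m → ℝ → ℝ) : ℝ → ℝ :=
  fun τ => ∑ i : Fin (m+1), |uext u i τ|

section Stmt10Aux2

variable {m : ℕ} {u : Fin m → ℝ → ℝ} {T : ℝ}

private lemma SS_int (hT : 0 ≤ T) (hu : ∀ i, IntegrableOn (u i) (Set.Icc 0 T)) :
    IntegrableOn (SS u) (Set.Icc 0 T) :=
  MeasureTheory.integrable_finset_sum _ (fun i _ => uext_abs_int hT hu i)

private lemma SS_nonneg (τ : ℝ) : 0 ≤ SS u τ :=
  Finset.sum_nonneg fun _ _ => abs_nonneg _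

set_option maxHeartbeats 1000000 in
private lemma sum_words (hT : 0 ≤ T) (hu : ∀ i, IntegrableOn (u i) (Set.Icc 0 T)) (k : ℕ) :
    ∀ t ∈ Set.Icc (0:ℝ) T,
      (∑ g : Fin k → Fin (m+1), AA u (List.ofFn g) t)
        ≤ (∫ s in (0:ℝ)..t, SS u s) ^ k / (Nat.factorial k : ℝ) := by
  induction k with
  | zero => intro t ht; simp [AA]
  | succ k ih =>
    intro t ht
    set V : ℝ → ℝ := fun x => ∫ s in (0:ℝ)..x, SS u s with hVdef
    set B : ℝ → ℝ := fun τ => ∑ g : Fin k → Fin (m+1), AA u (List.ofFn g) τ with hBdef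
    have hBint_i : ∀ i : Fin (m+1),
        IntegrableOn (fun τ => |uext u i τ| * B τ) (Set.Icc 0 T) := by
      intro i
      have : (fun τ => |uext u i τ| * B τ)
          = fun τ => ∑ g : Fin k → Fin (m+1), |uext u i τ| * AA u (List.ofFn g) τ := by
        funext τ; rw [hBdef]; exact Finset.mul_sum _ _ _
      rw [this]
      exact MeasureTheory.integrable_finset_sum _ (fun g _ => AA_int hT hu i (List.ofFn g))
    have step1 : (∑ g : Fin (k+1) → Fin (m+1), AA u (List.ofFn g) t)
        = ∑ p : Fin (m+1) × (Fin k → Fin (m+1)), AA u (p.1 :: List.ofFn p.2) t := by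
      apply Fintype.sum_equiv (Fin.consEquiv (fun _ : Fin (k+1) => Fin (m+1))).symm
      intro g
      simp only [List.ofFn_succ, Function.comp_def]
      rfl
    have step2 : ∀ i : Fin (m+1),
        (∑ g : Fin k → Fin (m+1), AA u (i :: List.ofFn g) t)
          = ∫ τ in (0:ℝ)..t, |uext u i τ| * B τ := by
      intro i
      have h1 : ∀ g : Fin k → Fin (m+1), AA u (i :: List.ofFn g) t
          = ∫ τ in (0:ℝ)..t, |uext u i τ| * AA u (List.ofFn g) τ := fun g => rfl
      have h2 : (∫ τ in (0:ℝ)..t,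
            ∑ g : Fin k → Fin (m+1), |uext u i τ| * AA u (List.ofFn g) τ)
          = ∑ g : Fin k → Fin (m+1), ∫ τ in (0:ℝ)..t, |uext u i τ| * AA u (List.ofFn g) τ :=
        intervalIntegral.integral_finset_sum
          (fun g _ => intInt_of_mem (AA_int hT hu i (List.ofFn g)) ht)
      have h3 : (fun τ => |uext u i τ| * B τ)
          = fun τ => ∑ g : Fin k → Fin (m+1), |uext u i τ| * AA u (List.ofFn g) τ := by
        funext τ; rw [hBdef]; exact Finset.mul_sum _ _ _
      rw [h3]
      rw [h2]
      exact Finset.sum_congr rfl fun g _ => h1 g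
    have step3 : (∑ g : Fin (k+1) → Fin (m+1), AA u (List.ofFn g) t)
        = ∫ τ in (0:ℝ)..t, SS u τ * B τ := by
      rw [step1, Fintype.sum_prod_type]
      have : ∀ i : Fin (m+1), (∑ g : Fin k → Fin (m+1), AA u (i :: List.ofFn g) t)
          = ∫ τ in (0:ℝ)..t, |uext u i τ| * B τ := step2
      rw [Finset.sum_congr rfl fun i _ => this i]
      rw [← intervalIntegral.integral_finset_sum
        (fun i _ => intInt_of_mem (hBint_i i) ht)]
      congr 1
      funext τ
      show (∑ i : Fin (m+1), |uext u i τ| * B τ) = SS u τ * B τ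
      exact (Finset.sum_mul Finset.univ (fun i => |uext u i τ|) (B τ)).symm
    have hVk_cont : ContinuousOn (fun τ => V τ ^ k / (Nat.factorial k : ℝ)) (Set.Icc 0 T) :=
      ((Vcont hT (SS_int hT hu)).pow k).div_const _
    have hRint : IntegrableOn (fun τ => SS u τ * (V τ ^ k / (Nat.factorial k : ℝ)))
        (Set.Icc 0 T) := mul_cont_integrable (SS_int hT hu) hVk_cont
    have step4 : (∫ τ in (0:ℝ)..t, SS u τ * B τ)
        ≤ ∫ τ in (0:ℝ)..t, SS u τ * (V τ ^ k / (Nat.factorial k : ℝ)) := by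
      refine intervalIntegral.integral_mono_on ht.1 ?_ (intInt_of_mem hRint ht) ?_
      · have hBcont : ContinuousOn B (Set.Icc 0 T) := by
          rw [hBdef]
          exact continuousOn_finset_sum _ (fun g _ => (AA_props hT hu (List.ofFn g)).1)
        exact intInt_of_mem (mul_cont_integrable (SS_int hT hu) hBcont) ht
      · intro x hx
        exact mul_le_mul_of_nonneg_left (ih x ⟨hx.1, hx.2.trans ht.2⟩) (SS_nonneg x)
    have step5 : (∫ τ in (0:ℝ)..t, SS u τ * (V τ ^ k / (Nat.factorial k : ℝ)))
        = V t ^ (k+1) / (Nat.factorial (k+1) : ℝ) := by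
      have h1 : (fun τ => SS u τ * (V τ ^ k / (Nat.factorial k : ℝ)))
          = fun τ => (SS u τ * V τ ^ k) / (Nat.factorial k : ℝ) := by
        funext τ; ring
      rw [h1, intervalIntegral.integral_div, key_id hT (SS_int hT hu) k t ht]
      rw [Nat.factorial_succ]
      have hk : (Nat.factorial k : ℝ) ≠ 0 := Nat.cast_ne_zero.2 (Nat.factorial_ne_zero k)
      push_cast
      field_simp
      rfl
    calc (∑ g : Fin (k+1) → Fin (m+1), AA u (List.ofFn g) t)
        = ∫ τ in (0:ℝ)..t, SS u τ * B τ := step3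
      _ ≤ ∫ τ in (0:ℝ)..t, SS u τ * (V τ ^ k / (Nat.factorial k : ℝ)) := step4
      _ = V t ^ (k+1) / (Nat.factorial (k+1) : ℝ) := step5

end Stmt10Aux2

/-- Under the growth bound `|(c,η)| ≤ K M^{|η|} |η|!` and with
`max{‖u‖₁,T} ≤ R < 1/(M(m+1))`, the Chen–Fliess series
`y(t) = Σ_η (c,η) E_η[u](t)` converges absolutely and uniformly on `[0,T]`, and
`|y(t)| ≤ Σ_k K(MR(m+1))^k = K/(1 − MR(m+1))`. -/
theorem stmt10 {m ℓ : ℕ} (T K M R : ℝ) (hT : 0 < T) (hK : 0 ≤ K) (hM : 0 ≤ M)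
    (c : Word m → Fin ℓ → ℝ)
    (hc : ∀ η : Word m, ‖c η‖ ≤ K * M ^ η.length * (Nat.factorial η.length : ℝ))
    (u : Fin m → ℝ → ℝ) (hu : ∀ i, IntegrableOn (u i) (Set.Icc 0 T))
    (hu1 : ∀ i, (∫ τ in (0 : ℝ)..T, |u i τ|) ≤ R) (hTR : T ≤ R)
    (hR : M * R * (m + 1) < 1) :
    (∀ t ∈ Set.Icc (0 : ℝ) T, Summable fun η : Word m => ‖E u η t • c η‖) ∧
    TendstoUniformlyOn (fun (s : Finset (Word m)) t => ∑ η ∈ s, E u η t • c η)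
      (fun t => ∑' η : Word m, E u η t • c η) Filter.atTop (Set.Icc 0 T) ∧
    (∀ t ∈ Set.Icc (0 : ℝ) T,
      ‖∑' η : Word m, E u η t • c η‖ ≤ K / (1 - M * R * (m + 1))) := by
  have hT0 : (0:ℝ) ≤ T := hT.le
  have hR0 : (0:ℝ) ≤ R := hT0.trans hTR
  set q : ℝ := M * R * (m + 1) with hq
  have hq0 : 0 ≤ q := by positivity
  have hq1 : q < 1 := hR
  have h1q : 0 < 1 - q := by linarith
  set VT : ℝ := ∫ s in (0:ℝ)..T, SS u s with hVTdef
  have hVT_nonneg : 0 ≤ VT := by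
    rw [hVTdef]
    exact intervalIntegral.integral_nonneg hT0 (fun x _ => SS_nonneg x)
  have hVT_le : VT ≤ R * (m + 1) := by
    rw [hVTdef]
    show (∫ s in (0:ℝ)..T, ∑ i : Fin (m+1), |uext u i s|) ≤ R * (m + 1)
    rw [intervalIntegral.integral_finset_sum
      (fun i _ => intInt_of_mem (uext_abs_int hT0 hu i) ⟨hT0, le_rfl⟩)]
    rw [Fin.sum_univ_succ]
    have h0 : (∫ s in (0:ℝ)..T, |uext u (0 : Fin (m+1)) s|) = T := by
      simp [uext]
    have hsucc : ∀ i : Fin m, (∫ s in (0:ℝ)..T, |uext u i.succ s|) ≤ R := by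
      intro i
      simpa [uext] using hu1 i
    have hsum : (∑ i : Fin m, ∫ s in (0:ℝ)..T, |uext u i.succ s|) ≤ (m : ℝ) * R := by
      calc (∑ i : Fin m, ∫ s in (0:ℝ)..T, |uext u i.succ s|)
          ≤ ∑ _i : Fin m, R := Finset.sum_le_sum (fun i _ => hsucc i)
        _ = (m : ℝ) * R := by simp [Finset.sum_const, mul_comm]
    have hring : R * ((m : ℝ) + 1) = R + (m : ℝ) * R := by ring
    rw [h0, hring]
    linarith
  have hMVT0 : 0 ≤ M * VT := mul_nonneg hM hVT_nonneg
  have hMVTq : M * VT ≤ q := by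
    rw [hq]
    calc M * VT ≤ M * (R * (m + 1)) := mul_le_mul_of_nonneg_left hVT_le hM
      _ = M * R * (m + 1) := by ring
  -- per-length bound on the sums of the majorant
  have hlen : ∀ k : ℕ,
      (∑ g : Fin k → Fin (m+1),
        (K * M ^ k * (Nat.factorial k : ℝ)) * AA u (List.ofFn g) T) ≤ K * q ^ k := by
    intro k
    rw [← Finset.mul_sum]
    have h1 := sum_words hT0 hu k T ⟨hT0, le_rfl⟩
    rw [← hVTdef] at h1
    have hco : (0:ℝ) ≤ K * M ^ k * (Nat.factorial k : ℝ) := by positivity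
    have hkne : ((Nat.factorial k : ℝ)) ≠ 0 := Nat.cast_ne_zero.2 (Nat.factorial_ne_zero k)
    calc (K * M ^ k * (Nat.factorial k : ℝ)) * ∑ g : Fin k → Fin (m+1), AA u (List.ofFn g) T
        ≤ (K * M ^ k * (Nat.factorial k : ℝ)) * (VT ^ k / (Nat.factorial k : ℝ)) :=
          mul_le_mul_of_nonneg_left h1 hco
      _ = K * (M * VT) ^ k := by field_simp; ring
      _ ≤ K * q ^ k := mul_le_mul_of_nonneg_left (pow_le_pow_left₀ hMVT0 hMVTq k) hK
  -- the majorant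
  set w : Word m → ℝ :=
    fun η => (K * M ^ η.length * (Nat.factorial η.length : ℝ)) * AA u η T with hwdef
  have hw0 : ∀ η, 0 ≤ w η := fun η =>
    mul_nonneg (by positivity) ((AA_props hT0 hu η).2 T ⟨hT0, le_rfl⟩)
  have hbound : ∀ η : Word m, ∀ t ∈ Set.Icc (0:ℝ) T, ‖E u η t • c η‖ ≤ w η := by
    intro η t ht
    rw [norm_smul, Real.norm_eq_abs]
    have h1 : |E u η t| ≤ AA u η T :=
      ((E_props hT0 hu η).2 t ht).trans (AA_mono hT0 hu η ht)
    calc |E u η t| * ‖c η‖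
        ≤ AA u η T * (K * M ^ η.length * (Nat.factorial η.length : ℝ)) :=
          mul_le_mul h1 (hc η) (norm_nonneg _) ((AA_props hT0 hu η).2 T ⟨hT0, le_rfl⟩)
      _ = w η := by rw [hwdef]; ring
  -- partial sums of the majorant are bounded by `K / (1 - q)`
  have hgeom : Summable (fun k : ℕ => q ^ k) := summable_geometric_of_lt_one hq0 hq1
  have hpartial : ∀ s : Finset (Word m), (∑ η ∈ s, w η) ≤ K / (1 - q) := by
    intro s
    classical
    set N := s.sup List.length with hN
    set words : ℕ → Finset (Word m) :=
      fun k => Finset.image (fun g : Fin k → Fin (m+1) => List.ofFn g) Finset.univ with hwords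
    have hlenmem : ∀ k, ∀ η ∈ words k, η.length = k := by
      intro k η hη
      rw [hwords] at hη
      obtain ⟨g, _, rfl⟩ := Finset.mem_image.1 hη
      exact List.length_ofFn
    have hsub : s ⊆ (Finset.range (N+1)).biUnion words := by
      intro η hη
      refine Finset.mem_biUnion.2 ⟨η.length,
        Finset.mem_range.2 (Nat.lt_succ_of_le (Finset.le_sup hη)), ?_⟩
      rw [hwords]
      exact Finset.mem_image.2 ⟨η.get, Finset.mem_univ _, List.ofFn_get η⟩
    have hdisj : (↑(Finset.range (N+1)) : Set ℕ).PairwiseDisjoint words := by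
      intro k₁ _ k₂ _ hk
      refine Finset.disjoint_left.2 ?_
      intro η h1 h2
      exact hk ((hlenmem k₁ η h1).symm.trans (hlenmem k₂ η h2))
    calc (∑ η ∈ s, w η)
        ≤ ∑ η ∈ (Finset.range (N+1)).biUnion words, w η :=
          Finset.sum_le_sum_of_subset_of_nonneg hsub (fun η _ _ => hw0 η)
      _ = ∑ k ∈ Finset.range (N+1), ∑ η ∈ words k, w η := Finset.sum_biUnion hdisj
      _ ≤ ∑ k ∈ Finset.range (N+1), K * q ^ k := by
          refine Finset.sum_le_sum (fun k _ => ?_)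
          have himg : (∑ η ∈ words k, w η)
              = ∑ g : Fin k → Fin (m+1), w (List.ofFn g) := by
            rw [hwords]
            exact Finset.sum_image (fun g _ g' _ h => List.ofFn_injective h)
          rw [himg]
          have : ∀ g : Fin k → Fin (m+1),
              w (List.ofFn g) = (K * M ^ k * (Nat.factorial k : ℝ)) * AA u (List.ofFn g) T := by
            intro g
            rw [hwdef]
            simp [List.length_ofFn]
          rw [Finset.sum_congr rfl (fun g _ => this g)]
          exact hlen k
      _ = K * ∑ k ∈ Finset.range (N+1), q ^ k := by rw [Finset.mul_sum]
      _ ≤ K * (1 - q)⁻¹ := by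
          refine mul_le_mul_of_nonneg_left ?_ hK
          have := Summable.sum_le_tsum (Finset.range (N+1)) (fun k _ => pow_nonneg hq0 k) hgeom
          rwa [tsum_geometric_of_lt_one hq0 hq1] at this
      _ = K / (1 - q) := (div_eq_mul_inv K (1 - q)).symm
  have hwsum : Summable w := summable_of_sum_le hw0 hpartial
  refine ⟨?_, ?_, ?_⟩
  · intro t ht
    exact Summable.of_nonneg_of_le (fun η => norm_nonneg _) (fun η => hbound η t ht) hwsum
  · exact tendstoUniformlyOn_tsum hwsum (fun η t ht => hbound η t ht)
  · intro t ht
    have hsm : Summable fun η : Word m => ‖E u η t • c η‖ :=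
      Summable.of_nonneg_of_le (fun η => norm_nonneg _) (fun η => hbound η t ht) hwsum
    calc ‖∑' η : Word m, E u η t • c η‖
        ≤ ∑' η : Word m, ‖E u η t • c η‖ := norm_tsum_le_tsum_norm hsm
      _ ≤ ∑' η : Word m, w η := Summable.tsum_le_tsum (fun η => hbound η t ht) hsm hwsum
      _ ≤ K / (1 - q) := Summable.tsum_le_of_sum_le hwsum hpartial
end

section
/- Fix M > 0 and u ∈ L₁^m[0,T] with max{‖u‖₁, T} < 1/(M(m+1)). The map c ↦ F_c[u] from the Banach space ℓ_{∞,M}(X*, ℝ^ℓ) to L_∞^ℓ[0,T] is a bounded linear operator with operator norm at most 1/(1 − M R (m+1)) where R := max{‖u‖₁, T}; in particular it is continuous. -/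
open MeasureTheory

/-- The Chen–Fliess series `F_c[u](t) = Σ_η (c,η) E_η[u](t)`. -/
noncomputable def Fc {m ℓ : ℕ} (c : Word m → Fin ℓ → ℝ) (u : Fin m → ℝ → ℝ) (t : ℝ) :
    Fin ℓ → ℝ :=
  ∑' η : Word m, E u η t • c η

/-- Majorant iterated integrals built from `|u|`. -/
noncomputable def Ebar {m : ℕ} (u : Fin m → ℝ → ℝ) : Word m → ℝ → ℝ
  | [] => fun _ => 1
  | i :: η => fun t => ∫ τ in (0 : ℝ)..t, |uext u i τ| * Ebar u η τ

lemma intKey (g : ℝ → ℝ) (hgm : Measurable g) (hg : Integrable g)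
    (hgnn : ∀ x, 0 ≤ g x) :
    ∀ (k : ℕ) (t : ℝ), 0 ≤ t →
      (∫ τ in (0:ℝ)..t, g τ * (∫ s in (0:ℝ)..τ, g s) ^ k)
        = (∫ s in (0:ℝ)..t, g s) ^ (k + 1) / (k + 1) := by
  set V : ℝ → ℝ := fun x => ∫ s in (0:ℝ)..x, g s with hVdef
  have hii : ∀ a b : ℝ, IntervalIntegrable g volume a b := fun a b => hg.intervalIntegrable
  have hVcont : Continuous V := intervalIntegral.continuous_primitive hii 0
  have hVm : Measurable V := hVcont.measurable
  set C : ℝ := ∫ s, g s with hC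
  have h2 : ∀ a b : ℝ, a ≤ b → 0 ≤ ∫ s in a..b, g s := fun a b hab =>
    intervalIntegral.integral_nonneg hab fun s _ => hgnn s
  have h1 : ∀ a b : ℝ, a ≤ b → (∫ s in a..b, g s) ≤ C := fun a b hab => by
    rw [intervalIntegral.integral_of_le hab]
    exact setIntegral_le_integral hg (Filter.Eventually.of_forall hgnn)
  have hVb : ∀ x, |V x| ≤ C := by
    intro x
    rcases le_total 0 x with hx | hx
    · rw [abs_of_nonneg (h2 0 x hx)]; exact h1 0 x hx
    · rw [show V x = -(∫ s in x..(0:ℝ), g s) from intervalIntegral.integral_symm x 0,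
        abs_neg, abs_of_nonneg (h2 x 0 hx)]
      exact h1 x 0 hx
  have hψm : ∀ j : ℕ, Measurable (fun τ => g τ * V τ ^ j) := fun j =>
    hgm.mul (hVm.pow_const j)
  have hψint : ∀ j : ℕ, Integrable (fun τ => g τ * V τ ^ j) := by
    intro j
    refine (hg.mul_const (C ^ j)).mono' (hψm j).aestronglyMeasurable ?_
    refine Filter.Eventually.of_forall fun τ => ?_
    have h0C : 0 ≤ C := le_trans (abs_nonneg _) (hVb 0)
    calc ‖g τ * V τ ^ j‖ = g τ * |V τ| ^ j := by
          rw [Real.norm_eq_abs, abs_mul, abs_of_nonneg (hgnn τ), abs_pow]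
      _ ≤ g τ * C ^ j := by
          refine mul_le_mul_of_nonneg_left (pow_le_pow_left₀ (abs_nonneg _) (hVb τ) j) (hgnn τ)
  intro k
  induction k with
  | zero => intro t ht; simp
  | succ k ih =>
    intro t ht
    set D : Set ℝ := Set.Ioc (0:ℝ) t with hD
    have hDm : MeasurableSet D := measurableSet_Ioc
    set μ : Measure ℝ := volume.restrict D with hμ
    set ψ : ℝ → ℝ := fun τ => g τ * V τ ^ k with hψ
    set f : ℝ → ℝ → ℝ := fun τ s => if s ≤ τ then g s * ψ τ else 0 with hf
    have hFm : Measurable (Function.uncurry f) := by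
      refine Measurable.ite (measurableSet_le measurable_snd measurable_fst) ?_ measurable_const
      exact (hgm.comp measurable_snd).mul ((hψm k).comp measurable_fst)
    have hFint : Integrable (Function.uncurry f) (μ.prod μ) := by
      have hdom : Integrable (fun p : ℝ × ℝ => (g p.1 * C ^ k) * g p.2) (μ.prod μ) := by
        have h2' : Integrable (fun p : ℝ × ℝ => (g p.1 * C ^ k) * g p.2)
            (volume.prod volume) := (hg.mul_const (C ^ k)).mul_prod hg
        rw [hμ, Measure.prod_restrict]
        exact h2'.restrict
      refine hdom.mono' hFm.aestronglyMeasurable ?_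
      refine Filter.Eventually.of_forall fun p => ?_
      simp only [Function.uncurry, hf]
      split_ifs with hle
      · calc |g p.2 * ψ p.1| = (g p.1 * |V p.1| ^ k) * g p.2 := by
              rw [abs_mul, abs_of_nonneg (hgnn p.2), hψ, abs_mul,
                abs_of_nonneg (hgnn p.1), abs_pow]; ring
          _ ≤ (g p.1 * C ^ k) * g p.2 := by
              have h0C : 0 ≤ C := le_trans (abs_nonneg _) (hVb 0)
              refine mul_le_mul_of_nonneg_right
                (mul_le_mul_of_nonneg_left (pow_le_pow_left₀ (abs_nonneg _) (hVb p.1) k)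
                  (hgnn p.1)) (hgnn p.2)
      · simp only [norm_zero]
        have h0C : 0 ≤ C := le_trans (abs_nonneg _) (hVb 0)
        exact mul_nonneg (mul_nonneg (hgnn _) (pow_nonneg h0C k)) (hgnn _)
    have key1 : (∫ τ in (0:ℝ)..t, g τ * V τ ^ (k+1)) = ∫ τ, (∫ s, f τ s ∂μ) ∂μ := by
      rw [intervalIntegral.integral_of_le ht]
      refine setIntegral_congr_fun hDm fun τ hτ => ?_
      have hinner : (fun s => f τ s) = fun s => Set.indicator (Set.Iic τ) g s * ψ τ := by
        funext s
        by_cases hs : s ≤ τ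
        · simp [hf, hs, Set.indicator_of_mem (Set.mem_Iic.mpr hs)]
        · simp [hf, hs, Set.indicator_of_notMem (fun h => hs (Set.mem_Iic.mp h))]
      rw [hinner]
      rw [MeasureTheory.integral_mul_const]
      rw [integral_indicator measurableSet_Iic]
      rw [hμ, Measure.restrict_restrict measurableSet_Iic]
      have hset : Set.Iic τ ∩ D = Set.Ioc 0 τ := by
        ext s
        simp only [Set.mem_inter_iff, Set.mem_Iic, hD, Set.mem_Ioc]
        exact ⟨fun ⟨hsτ, h0s, _⟩ => ⟨h0s, hsτ⟩, fun ⟨h0s, hsτ⟩ => ⟨hsτ, h0s, hsτ.trans hτ.2⟩⟩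
      rw [hset, ← intervalIntegral.integral_of_le (le_of_lt hτ.1)]
      show g τ * V τ ^ (k+1) = V τ * ψ τ
      rw [hψ]; ring
    have key2 : (∫ s, (∫ τ, f τ s ∂μ) ∂μ)
        = ∫ s in D, (V t ^ (k+1) / (k+1) - V s ^ (k+1) / (k+1)) * g s := by
      refine setIntegral_congr_fun hDm fun s hs => ?_
      have hinner : (fun τ => f τ s) = fun τ => Set.indicator (Set.Ici s) ψ τ * g s := by
        funext τ
        by_cases hsτ : s ≤ τ
        · simp only [hf, if_pos hsτ, Set.indicator_of_mem (Set.mem_Ici.mpr hsτ)]; ring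
        · simp [hf, hsτ, Set.indicator_of_notMem (fun h => hsτ (Set.mem_Ici.mp h))]
      rw [hinner, MeasureTheory.integral_mul_const, integral_indicator measurableSet_Ici,
        hμ, Measure.restrict_restrict measurableSet_Ici]
      have hset : Set.Ici s ∩ D = Set.Icc s t := by
        ext τ
        simp only [Set.mem_inter_iff, Set.mem_Ici, hD, Set.mem_Ioc, Set.mem_Icc]
        exact ⟨fun ⟨hsτ, _, hτt⟩ => ⟨hsτ, hτt⟩, fun ⟨hsτ, hτt⟩ => ⟨hsτ, lt_of_lt_of_le hs.1 hsτ, hτt⟩⟩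
      rw [hset, integral_Icc_eq_integral_Ioc,
        ← intervalIntegral.integral_of_le hs.2,
        ← intervalIntegral.integral_interval_sub_left ((hψint k).intervalIntegrable)
          ((hψint k).intervalIntegrable)]
      rw [show (∫ τ in (0:ℝ)..t, ψ τ) = V t ^ (k+1) / (k+1) from ih t ht,
        show (∫ τ in (0:ℝ)..s, ψ τ) = V s ^ (k+1) / (k+1) from ih s (le_of_lt hs.1)]
    have hswap := MeasureTheory.integral_integral_swap hFint
    have hXeq : (∫ τ in (0:ℝ)..t, g τ * V τ ^ (k+1)) = ∫ τ in D, g τ * V τ ^ (k+1) :=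
      intervalIntegral.integral_of_le ht
    have key3 : (∫ s in D, (V t ^ (k+1) / (k+1) - V s ^ (k+1) / (k+1)) * g s)
        = V t ^ (k+1) / (k+1) * V t
          - ((k:ℝ)+1)⁻¹ * ∫ τ in (0:ℝ)..t, g τ * V τ ^ (k+1) := by
      have hre : (fun s => (V t ^ (k+1) / (k+1) - V s ^ (k+1) / (k+1)) * g s)
          = fun s => (V t ^ (k+1) / ((k:ℝ)+1)) * g s - ((k:ℝ)+1)⁻¹ * (g s * V s ^ (k+1)) := by
        funext s; ring
      rw [hre]
      rw [MeasureTheory.integral_sub ((hg.restrict).const_mul _)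
        (((hψint (k+1)).restrict).const_mul _)]
      rw [MeasureTheory.integral_const_mul, MeasureTheory.integral_const_mul]
      rw [show (∫ s in D, g s) = V t from (intervalIntegral.integral_of_le ht).symm]
      rw [← hXeq]
    have heq : (∫ τ in D, g τ * V τ ^ (k+1))
        = V t ^ (k+1) / (k+1) * V t
          - ((k:ℝ)+1)⁻¹ * ∫ τ in D, g τ * V τ ^ (k+1) := by
      have h := key1.trans (hswap.trans (key2.trans key3))
      rw [hXeq] at h
      exact h
    have hk1 : (0:ℝ) < (k:ℝ) + 1 := by positivity
    have hpow : V t ^ (k+1) * V t = V t ^ (k+1+1) := (pow_succ (V t) (k+1)).symm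
    rw [show ((∫ τ in (0:ℝ)..t, g τ * (∫ s in (0:ℝ)..τ, g s) ^ (k+1)) : ℝ)
      = ∫ τ in D, g τ * V τ ^ (k+1) from hXeq]
    push_cast
    set Y : ℝ := ∫ τ in D, g τ * V τ ^ (k+1) with hY
    field_simp at heq ⊢
    nlinarith [heq, hpow]

set_option maxHeartbeats 1000000 in
/-- For fixed `M > 0` and `u ∈ L₁^m[0,T]` with
`R := max{‖u‖₁,T} < 1/(M(m+1))`, the map `c ↦ F_c[u]` from `ℓ_{∞,M}(X*,ℝ^ℓ)` to
`L_∞^ℓ[0,T]` is linear and bounded with operator norm at most `1/(1 − MR(m+1))`;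
in particular it is continuous. -/
theorem stmt11 {m ℓ : ℕ} (M T R : ℝ) (hM : 0 < M) (hT : 0 < T)
    (u : Fin m → ℝ → ℝ) (hu : ∀ i, IntegrableOn (u i) (Set.Icc 0 T))
    (hu1 : ∀ i, (∫ τ in (0 : ℝ)..T, |u i τ|) ≤ R) (hTR : T ≤ R)
    (hR : M * R * (m + 1) < 1) :
    (∀ c d : Word m → Fin ℓ → ℝ, memLinf M c → memLinf M d →
      ∀ t ∈ Set.Icc (0 : ℝ) T, Fc (c + d) u t = Fc c u t + Fc d u t) ∧
    (∀ (a : ℝ) (c : Word m → Fin ℓ → ℝ), memLinf M c →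
      ∀ t ∈ Set.Icc (0 : ℝ) T, Fc (a • c) u t = a • Fc c u t) ∧
    (∀ c : Word m → Fin ℓ → ℝ, memLinf M c → ∀ t ∈ Set.Icc (0 : ℝ) T,
      ‖Fc c u t‖ ≤ (1 - M * R * (m + 1))⁻¹ * wnorm M c) := by
  classical
  have hRpos : 0 < R := lt_of_lt_of_le hT hTR
  set q : ℝ := M * R * (m + 1) with hqdef
  have hq0 : 0 ≤ q := by positivity
  have hq1 : q < 1 := hR
  -- measurable modification of u
  set u2 : Fin m → ℝ → ℝ := fun i => (hu i).aestronglyMeasurable.mk (u i) with hu2def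
  have hu2m : ∀ i, StronglyMeasurable (u2 i) :=
    fun i => (hu i).aestronglyMeasurable.stronglyMeasurable_mk
  have hu2ae : ∀ i, u i =ᵐ[volume.restrict (Set.Icc 0 T)] u2 i :=
    fun i => (hu i).aestronglyMeasurable.ae_eq_mk
  have hu2int : ∀ i, IntegrableOn (u2 i) (Set.Icc 0 T) := fun i => (hu i).congr (hu2ae i)
  set g : ℝ → ℝ := Set.indicator (Set.Icc 0 T) (fun τ => 1 + ∑ i, |u2 i τ|) with hgdef
  have hgm : Measurable g := by
    refine Measurable.indicator ?_ measurableSet_Icc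
    exact measurable_const.add (Finset.measurable_sum _ fun i _ => (hu2m i).measurable.abs)
  have hgnn : ∀ x, 0 ≤ g x := by
    intro x
    refine Set.indicator_nonneg (fun τ _ => ?_) x
    have : 0 ≤ ∑ i, |u2 i τ| := Finset.sum_nonneg fun i _ => abs_nonneg _
    linarith
  have hgint : Integrable g := by
    rw [hgdef, integrable_indicator_iff measurableSet_Icc]
    refine Integrable.add ?_ ?_
    · exact integrableOn_const measure_Icc_lt_top.ne
    · exact integrable_finset_sum _ fun i _ => (hu2int i).abs
  have hgeq : ∀ᵐ τ ∂(volume.restrict (Set.Icc 0 T)), g τ = 1 + ∑ i, |u i τ| := by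
    have h1 : ∀ᵐ τ ∂(volume.restrict (Set.Icc 0 T)), ∀ i, u i τ = u2 i τ :=
      ae_all_iff.mpr fun i => hu2ae i
    filter_upwards [h1, ae_restrict_mem measurableSet_Icc] with τ hτ hmem
    rw [hgdef]
    simp only [Set.indicator_of_mem hmem]
    congr 1
    exact (Finset.sum_congr rfl fun i _ => by rw [hτ i]).symm
  -- the primitive V
  set V : ℝ → ℝ := fun x => ∫ s in (0:ℝ)..x, g s with hVdef
  have hVcont : Continuous V :=
    intervalIntegral.continuous_primitive (fun a b => hgint.intervalIntegrable) 0
  have hVnn : ∀ x, 0 ≤ x → 0 ≤ V x :=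
    fun x hx => intervalIntegral.integral_nonneg hx fun s _ => hgnn s
  have hVle : ∀ t ∈ Set.Icc (0:ℝ) T, V t ≤ ((m:ℝ) + 1) * R := by
    intro t ht
    have hadd := intervalIntegral.integral_add_adjacent_intervals (a := (0:ℝ)) (b := t) (c := T)
      hgint.intervalIntegrable hgint.intervalIntegrable
    have h2 : 0 ≤ ∫ s in t..T, g s := intervalIntegral.integral_nonneg ht.2 fun s _ => hgnn s
    have h1 : V t ≤ V T := by
      have : V t + ∫ s in t..T, g s = V T := hadd
      linarith
    have h3 : V T = T + ∑ i, ∫ τ in (0:ℝ)..T, |u i τ| := by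
      have hae : ∀ᵐ τ ∂(volume.restrict (Set.Ioc 0 T)), g τ = 1 + ∑ i, |u i τ| :=
        ae_restrict_of_ae_restrict_of_subset Set.Ioc_subset_Icc_self hgeq
      have hVT : V T = ∫ τ in Set.Ioc (0:ℝ) T, (1 + ∑ i, |u i τ|) := by
        rw [hVdef]
        simp only
        rw [intervalIntegral.integral_of_le hT.le]
        exact integral_congr_ae hae
      rw [hVT, integral_add (integrableOn_const (C := (1:ℝ)) (μ := volume) measure_Ioc_lt_top.ne)
        (integrable_finset_sum _ fun i _ => (IntegrableOn.mono_set (hu i).abs Set.Ioc_subset_Icc_self)),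
        integral_finset_sum _ fun i _ => (IntegrableOn.mono_set (hu i).abs Set.Ioc_subset_Icc_self)]
      congr 1
      · simp [Real.volume_Ioc, hT.le]
      · exact Finset.sum_congr rfl fun i _ => (intervalIntegral.integral_of_le hT.le).symm
    have h4 : (∑ i : Fin m, ∫ τ in (0:ℝ)..T, |u i τ|) ≤ (m:ℝ) * R := by
      calc (∑ i : Fin m, ∫ τ in (0:ℝ)..T, |u i τ|) ≤ ∑ _i : Fin m, R :=
            Finset.sum_le_sum fun i _ => hu1 i
        _ = (m:ℝ) * R := by simp [Finset.sum_const, Finset.card_univ, nsmul_eq_mul]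
    have h5 : V T ≤ T + (m:ℝ) * R := by rw [h3]; linarith
    nlinarith
  have hMV : ∀ t ∈ Set.Icc (0:ℝ) T, M * V t ≤ q := by
    intro t ht
    have h1 := hVle t ht
    have h2 := mul_le_mul_of_nonneg_left h1 hM.le
    rw [hqdef]
    nlinarith
  -- integrability helpers
  have huext_int : ∀ j : Fin (m+1), IntegrableOn (uext u j) (Set.Icc 0 T) := by
    intro j
    induction j using Fin.cases with
    | zero =>
      have h : IntegrableOn (fun _ : ℝ => (1:ℝ)) (Set.Icc 0 T) :=
        integrableOn_const measure_Icc_lt_top.ne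
      simpa [uext] using h
    | succ i => simpa [uext] using hu i
  have hsum_uext : ∀ᵐ τ ∂(volume.restrict (Set.Icc 0 T)),
      (∑ j : Fin (m+1), |uext u j τ|) = g τ := by
    filter_upwards [hgeq] with τ hτ
    rw [Fin.sum_univ_succ, hτ]
    simp [uext]
  have hprod : ∀ f : ℝ → ℝ, IntegrableOn f (Set.Icc 0 T) → ∀ h : ℝ → ℝ,
      ContinuousOn h (Set.Icc 0 T) → IntegrableOn (fun τ => f τ * h τ) (Set.Icc 0 T) := by
    intro f hf h hh
    obtain ⟨C, hC⟩ := isCompact_Icc.exists_bound_of_continuousOn hh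
    refine (hf.norm.const_mul C).mono'
      (hf.aestronglyMeasurable.mul (hh.aestronglyMeasurable measurableSet_Icc)) ?_
    filter_upwards [ae_restrict_mem measurableSet_Icc] with τ hτ
    rw [Real.norm_eq_abs, abs_mul]
    calc |f τ| * |h τ| ≤ |f τ| * C := by
          refine mul_le_mul_of_nonneg_left ?_ (abs_nonneg _)
          simpa [Real.norm_eq_abs] using hC τ hτ
      _ = C * ‖f τ‖ := by rw [Real.norm_eq_abs]; ring
  have hII : ∀ f : ℝ → ℝ, IntegrableOn f (Set.Icc 0 T) → ∀ t ∈ Set.Icc (0:ℝ) T,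
      IntervalIntegrable f volume 0 t := by
    intro f hf t ht
    rw [intervalIntegrable_iff, Set.uIoc_of_le ht.1]
    exact hf.mono_set fun x hx => ⟨le_of_lt hx.1, hx.2.trans ht.2⟩
  have hprim : ∀ f : ℝ → ℝ, IntegrableOn f (Set.Icc 0 T) →
      ContinuousOn (fun t => ∫ τ in (0:ℝ)..t, f τ) (Set.Icc 0 T) := by
    intro f hf
    refine (intervalIntegral.continuousOn_primitive hf).congr fun x hx => ?_
    rw [intervalIntegral.integral_of_le hx.1]
  -- properties of E and Ebar
  have goodE : ∀ η : Word m,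
      (ContinuousOn (E u η) (Set.Icc 0 T) ∧ ContinuousOn (Ebar u η) (Set.Icc 0 T))
      ∧ ∀ t ∈ Set.Icc (0:ℝ) T, |E u η t| ≤ Ebar u η t ∧ 0 ≤ Ebar u η t := by
    intro η
    induction η with
    | nil =>
      refine ⟨⟨continuousOn_const, continuousOn_const⟩, fun t ht => ?_⟩
      constructor
      · show |(1:ℝ)| ≤ (1:ℝ)
        simp
      · show (0:ℝ) ≤ 1
        norm_num
    | cons i η ih =>
      obtain ⟨⟨hEc, hBc⟩, hb⟩ := ih
      have hint1 : IntegrableOn (fun τ => uext u i τ * E u η τ) (Set.Icc 0 T) :=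
        hprod _ (huext_int i) _ hEc
      have hint2 : IntegrableOn (fun τ => |uext u i τ| * Ebar u η τ) (Set.Icc 0 T) :=
        hprod _ (huext_int i).abs _ hBc
      refine ⟨⟨hprim _ hint1, hprim _ hint2⟩, fun t ht => ?_⟩
      have hEt : E u (i :: η) t = ∫ τ in (0:ℝ)..t, uext u i τ * E u η τ := rfl
      have hBt : Ebar u (i :: η) t = ∫ τ in (0:ℝ)..t, |uext u i τ| * Ebar u η τ := rfl
      constructor
      · rw [hEt, hBt]
        refine le_trans (intervalIntegral.abs_integral_le_integral_abs ht.1) ?_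
        refine intervalIntegral.integral_mono_on ht.1 ((hII _ hint1 t ht).abs)
          (hII _ hint2 t ht) ?_
        intro τ hτ
        have hτ' : τ ∈ Set.Icc (0:ℝ) T := ⟨hτ.1, hτ.2.trans ht.2⟩
        rw [abs_mul]
        exact mul_le_mul_of_nonneg_left (hb τ hτ').1 (abs_nonneg _)
      · rw [hBt]
        exact intervalIntegral.integral_nonneg ht.1 fun τ hτ =>
          mul_nonneg (abs_nonneg _) (hb τ ⟨hτ.1, hτ.2.trans ht.2⟩).2
  -- sum over words of fixed length
  have hSkcont : ∀ k : ℕ,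
      ContinuousOn (fun τ => ∑ v : Fin k → Fin (m+1), Ebar u (List.ofFn v) τ) (Set.Icc 0 T) :=
    fun k => continuousOn_finset_sum _ fun v _ => (goodE _).1.2
  have hSk : ∀ k : ℕ, ∀ t ∈ Set.Icc (0:ℝ) T,
      (∑ v : Fin k → Fin (m+1), Ebar u (List.ofFn v) t)
        ≤ V t ^ k / (Nat.factorial k : ℝ) := by
    intro k
    induction k with
    | zero =>
      intro t ht
      have h1 : ∀ v : Fin 0 → Fin (m+1), Ebar u (List.ofFn v) t = 1 := fun v => by
        rw [List.ofFn_zero]; rfl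
      rw [Finset.sum_congr rfl fun v _ => h1 v]
      simp
    | succ k ih =>
      intro t ht
      have hfac : (0:ℝ) < (Nat.factorial k : ℝ) := by
        exact_mod_cast Nat.factorial_pos k
      have hVkc : ContinuousOn (fun τ => V τ ^ k / (Nat.factorial k : ℝ)) (Set.Icc 0 T) :=
        ((hVcont.pow k).div_const _).continuousOn
      have e1 : (∑ v : Fin (k+1) → Fin (m+1), Ebar u (List.ofFn v) t)
          = ∑ p : Fin (m+1) × (Fin k → Fin (m+1)), Ebar u (p.1 :: List.ofFn p.2) t := by
        refine (Fintype.sum_equiv (Fin.consEquiv fun _ => Fin (m+1))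
          (fun p => Ebar u (p.1 :: List.ofFn p.2) t)
          (fun v => Ebar u (List.ofFn v) t) fun p => ?_).symm
        show Ebar u (p.1 :: List.ofFn p.2) t = Ebar u (List.ofFn (Fin.cons p.1 p.2)) t
        congr 1
        rw [List.ofFn_succ]
        simp
      have e2 : ∀ i : Fin (m+1),
          (∑ w : Fin k → Fin (m+1), Ebar u (i :: List.ofFn w) t)
          = ∫ τ in (0:ℝ)..t, |uext u i τ| * ∑ w : Fin k → Fin (m+1), Ebar u (List.ofFn w) τ := by
        intro i
        have h1 : ∀ w : Fin k → Fin (m+1), Ebar u (i :: List.ofFn w) t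
            = ∫ τ in (0:ℝ)..t, |uext u i τ| * Ebar u (List.ofFn w) τ := fun _ => rfl
        rw [Finset.sum_congr rfl fun w _ => h1 w,
          ← intervalIntegral.integral_finset_sum fun w _ =>
            hII _ (hprod _ (huext_int i).abs _ (goodE _).1.2) t ht]
        congr 1
        funext τ
        rw [Finset.mul_sum]
      have e3 : ∀ i : Fin (m+1),
          (∫ τ in (0:ℝ)..t, |uext u i τ| * ∑ w : Fin k → Fin (m+1), Ebar u (List.ofFn w) τ)
          ≤ ∫ τ in (0:ℝ)..t, |uext u i τ| * (V τ ^ k / (Nat.factorial k : ℝ)) := by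
        intro i
        refine intervalIntegral.integral_mono_on ht.1
          (hII _ (hprod _ (huext_int i).abs _ (hSkcont k)) t ht)
          (hII _ (hprod _ (huext_int i).abs _ hVkc) t ht) ?_
        intro τ hτ
        exact mul_le_mul_of_nonneg_left (ih τ ⟨hτ.1, hτ.2.trans ht.2⟩) (abs_nonneg _)
      have e4 : (∑ i : Fin (m+1), ∫ τ in (0:ℝ)..t, |uext u i τ| * (V τ ^ k / (Nat.factorial k : ℝ)))
          = ∫ τ in (0:ℝ)..t, (∑ i : Fin (m+1), |uext u i τ|) * (V τ ^ k / (Nat.factorial k : ℝ)) := by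
        rw [← intervalIntegral.integral_finset_sum fun i _ =>
          hII _ (hprod _ (huext_int i).abs _ hVkc) t ht]
        congr 1
        funext τ
        rw [Finset.sum_mul]
      have e5 : (∫ τ in (0:ℝ)..t, (∑ i : Fin (m+1), |uext u i τ|) * (V τ ^ k / (Nat.factorial k : ℝ)))
          = ∫ τ in (0:ℝ)..t, g τ * (V τ ^ k / (Nat.factorial k : ℝ)) := by
        rw [intervalIntegral.integral_of_le ht.1, intervalIntegral.integral_of_le ht.1]
        refine integral_congr_ae ?_
        have hsub : Set.Ioc (0:ℝ) t ⊆ Set.Icc (0:ℝ) T :=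
          fun x hx => ⟨le_of_lt hx.1, hx.2.trans ht.2⟩
        filter_upwards [ae_restrict_of_ae_restrict_of_subset hsub hsum_uext] with τ hτ
        rw [hτ]
      have e6 : (∫ τ in (0:ℝ)..t, g τ * (V τ ^ k / (Nat.factorial k : ℝ)))
          = (Nat.factorial k : ℝ)⁻¹ * ∫ τ in (0:ℝ)..t, g τ * V τ ^ k := by
        rw [show (fun τ => g τ * (V τ ^ k / (Nat.factorial k : ℝ)))
          = fun τ => (Nat.factorial k : ℝ)⁻¹ * (g τ * V τ ^ k) from funext fun τ => by ring,
          intervalIntegral.integral_const_mul]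
      have e7 : (∫ τ in (0:ℝ)..t, g τ * V τ ^ k) = V t ^ (k+1) / ((k:ℝ) + 1) :=
        intKey g hgm hgint hgnn k t ht.1
      calc (∑ v : Fin (k+1) → Fin (m+1), Ebar u (List.ofFn v) t)
          = ∑ i : Fin (m+1), ∑ w : Fin k → Fin (m+1), Ebar u (i :: List.ofFn w) t := by
            rw [e1, Fintype.sum_prod_type]
        _ = ∑ i : Fin (m+1), ∫ τ in (0:ℝ)..t,
              |uext u i τ| * ∑ w : Fin k → Fin (m+1), Ebar u (List.ofFn w) τ :=
            Finset.sum_congr rfl fun i _ => e2 i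
        _ ≤ ∑ i : Fin (m+1), ∫ τ in (0:ℝ)..t,
              |uext u i τ| * (V τ ^ k / (Nat.factorial k : ℝ)) :=
            Finset.sum_le_sum fun i _ => e3 i
        _ = (Nat.factorial k : ℝ)⁻¹ * (V t ^ (k+1) / ((k:ℝ) + 1)) := by
            rw [e4, e5, e6, e7]
        _ = V t ^ (k+1) / (Nat.factorial (k+1) : ℝ) := by
            rw [Nat.factorial_succ]
            push_cast
            rw [inv_mul_eq_div, div_div]
  -- main estimate and summability
  have main : ∀ c : Word m → Fin ℓ → ℝ, memLinf M c → ∀ t ∈ Set.Icc (0:ℝ) T,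
      Summable (fun η : Word m => E u η t • c η) ∧
      ‖Fc c u t‖ ≤ (1 - q)⁻¹ * wnorm M c := by
    intro c hc t ht
    set fB : Word m → ℝ :=
      fun η => M ^ η.length * (Nat.factorial η.length : ℝ) * Ebar u η t with hfBdef
    have hfBnn : ∀ η, 0 ≤ fB η := fun η => by
      have := ((goodE η).2 t ht).2
      positivity
    set F : (Σ n : ℕ, Fin n → Fin (m+1)) → ℝ := fun p => fB (List.ofFn p.2) with hFdef
    have hFnn : ∀ p, 0 ≤ F p := fun p => hfBnn _
    have hFcomp : ∀ l : Word m, F (List.equivSigmaTuple l) = fB l := fun l => by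
      show fB (List.ofFn (List.equivSigmaTuple l).2) = fB l
      rw [show List.ofFn (List.equivSigmaTuple l).2 = l from List.ofFn_get l]
    have hfib_le : ∀ n : ℕ, (∑ v : Fin n → Fin (m+1), F ⟨n, v⟩) ≤ q ^ n := by
      intro n
      have heq : (∑ v : Fin n → Fin (m+1), F ⟨n, v⟩)
          = M ^ n * (Nat.factorial n : ℝ) * ∑ v : Fin n → Fin (m+1), Ebar u (List.ofFn v) t := by
        rw [Finset.mul_sum]
        refine Finset.sum_congr rfl fun v _ => ?_
        rw [hFdef, hfBdef]
        simp [List.length_ofFn]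
      have hfac : (0:ℝ) < (Nat.factorial n : ℝ) := by exact_mod_cast Nat.factorial_pos n
      calc (∑ v : Fin n → Fin (m+1), F ⟨n, v⟩)
          ≤ M ^ n * (Nat.factorial n : ℝ) * (V t ^ n / (Nat.factorial n : ℝ)) := by
            rw [heq]
            refine mul_le_mul_of_nonneg_left (hSk n t ht) ?_
            positivity
        _ = (M * V t) ^ n := by
            rw [mul_pow, mul_assoc, mul_comm ((Nat.factorial n : ℝ)) (V t ^ n / (Nat.factorial n : ℝ)),
              div_mul_cancel₀ _ hfac.ne']
        _ ≤ q ^ n :=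
            pow_le_pow_left₀ (mul_nonneg hM.le (hVnn t ht.1)) (hMV t ht) n
    have hfib_nn : ∀ n : ℕ, 0 ≤ ∑ v : Fin n → Fin (m+1), F ⟨n, v⟩ :=
      fun n => Finset.sum_nonneg fun v _ => hFnn _
    have hgeo : Summable (fun n : ℕ => q ^ n) := summable_geometric_of_lt_one hq0 hq1
    have hfibsum : Summable (fun n : ℕ => ∑' v : Fin n → Fin (m+1), F ⟨n, v⟩) := by
      rw [show (fun n : ℕ => ∑' v : Fin n → Fin (m+1), F ⟨n, v⟩)
        = fun n : ℕ => ∑ v : Fin n → Fin (m+1), F ⟨n, v⟩ from funext fun n => tsum_fintype _]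
      exact Summable.of_nonneg_of_le hfib_nn hfib_le hgeo
    have hFsum : Summable F :=
      (summable_sigma_of_nonneg hFnn).mpr ⟨fun n => Summable.of_finite, hfibsum⟩
    have hfBsum : Summable fB := by
      have h1 : Summable (fun l : Word m => F (List.equivSigmaTuple l)) :=
        (List.equivSigmaTuple.summable_iff).mpr hFsum
      rw [show fB = fun l : Word m => F (List.equivSigmaTuple l) from
        funext fun l => (hFcomp l).symm]
      exact h1
    have htsumfB : (∑' η : Word m, fB η) ≤ (1 - q)⁻¹ := by
      have h0 : (∑' η : Word m, fB η) = ∑' p, F p := by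
        rw [← List.equivSigmaTuple.tsum_eq F]
        exact tsum_congr fun l => (hFcomp l).symm
      rw [h0, Summable.tsum_sigma' (fun n => Summable.of_finite) hFsum]
      calc (∑' (n : ℕ) (v : Fin n → Fin (m+1)), F ⟨n, v⟩)
          ≤ ∑' n : ℕ, q ^ n := by
            refine Summable.tsum_le_tsum (fun n => ?_) hfibsum hgeo
            rw [tsum_fintype]
            exact hfib_le n
        _ = (1 - q)⁻¹ := tsum_geometric_of_lt_one hq0 hq1
    have hden : ∀ η : Word m, (0:ℝ) < M ^ η.length * (Nat.factorial η.length : ℝ) := by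
      intro η
      have : (0:ℝ) < (Nat.factorial η.length : ℝ) := by
        exact_mod_cast Nat.factorial_pos η.length
      positivity
    have hwnn : 0 ≤ wnorm M c := by
      refine le_trans ?_ (le_ciSup hc ([] : Word m))
      rw [coefRatio]
      exact div_nonneg (norm_nonneg _) (hden []).le
    have hcnorm : ∀ η : Word m,
        ‖c η‖ ≤ wnorm M c * (M ^ η.length * (Nat.factorial η.length : ℝ)) := by
      intro η
      have h1 : coefRatio M c η ≤ wnorm M c := le_ciSup hc η
      rw [coefRatio] at h1
      exact (div_le_iff₀ (hden η)).mp h1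
    have hnorm_le : ∀ η : Word m, ‖E u η t • c η‖ ≤ wnorm M c * fB η := by
      intro η
      rw [norm_smul, Real.norm_eq_abs]
      calc |E u η t| * ‖c η‖
          ≤ Ebar u η t * (wnorm M c * (M ^ η.length * (Nat.factorial η.length : ℝ))) :=
            mul_le_mul ((goodE η).2 t ht).1 (hcnorm η) (norm_nonneg _) ((goodE η).2 t ht).2
        _ = wnorm M c * fB η := by rw [hfBdef]; ring
    have hsumN : Summable (fun η : Word m => ‖E u η t • c η‖) :=
      Summable.of_nonneg_of_le (fun _ => norm_nonneg _) hnorm_le (hfBsum.mul_left _)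
    have hsum : Summable (fun η : Word m => E u η t • c η) := Summable.of_norm hsumN
    refine ⟨hsum, ?_⟩
    calc ‖Fc c u t‖ = ‖∑' η : Word m, E u η t • c η‖ := rfl
      _ ≤ ∑' η : Word m, ‖E u η t • c η‖ := norm_tsum_le_tsum_norm hsumN
      _ ≤ ∑' η : Word m, wnorm M c * fB η :=
          Summable.tsum_le_tsum hnorm_le hsumN (hfBsum.mul_left _)
      _ = wnorm M c * ∑' η : Word m, fB η := tsum_mul_left
      _ ≤ wnorm M c * (1 - q)⁻¹ := by
          refine mul_le_mul_of_nonneg_left htsumfB hwnn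
      _ = (1 - q)⁻¹ * wnorm M c := mul_comm _ _
  refine ⟨?_, ?_, ?_⟩
  · intro c d hc hd t ht
    have h1 := (main c hc t ht).1
    have h2 := (main d hd t ht).1
    show (∑' η : Word m, E u η t • (c + d) η) = _ + _
    rw [show (fun η : Word m => E u η t • (c + d) η)
      = fun η : Word m => E u η t • c η + E u η t • d η from
      funext fun η => by rw [Pi.add_apply, smul_add]]
    exact Summable.tsum_add h1 h2
  · intro a c hc t ht
    have h1 := (main c hc t ht).1
    show (∑' η : Word m, E u η t • (a • c) η) = a • (∑' η : Word m, E u η t • c η)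
    rw [show (fun η : Word m => E u η t • (a • c) η)
      = fun η : Word m => a • (E u η t • c η) from
      funext fun η => by rw [Pi.smul_apply, smul_comm]]
    exact Summable.tsum_const_smul a h1
  · intro c hc t ht
    exact (main c hc t ht).2
end

section
/- Let 𝔭, 𝔮 ∈ (1,∞) be conjugate exponents. For every word η ∈ X* and every R, T > 0, the map u ↦ E_η[u] from the closed ball B_𝔭^m(R)[0,T] = {u ∈ L_𝔭^m[0,T] : ‖u‖_𝔭 ≤ R} to L_𝔮[0,T] is continuous with respect to the L_𝔭 and L_𝔮 norms. -/
open MeasureTheory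

/-- The `L_𝔮`-norm on `[0,T]` of a (possibly vector-valued) function. -/
noncomputable def LqN (q T : ℝ) {E' : Type*} [NormedAddCommGroup E'] (f : ℝ → E') : ℝ :=
  (eLpNorm f (ENNReal.ofReal q) (volume.restrict (Set.Icc 0 T))).toReal

/-- The `L_𝔭`-norm of a vector input: `‖u‖_𝔭 = max_{1 ≤ i ≤ m} ‖u_i‖_{L_𝔭[0,T]}`. -/
noncomputable def LpVec (p T : ℝ) {m : ℕ} (u : Fin m → ℝ → ℝ) : ℝ :=
  ⨆ i : Fin m, LqN p T (u i)

/-- Membership in the ball `B_𝔭^m(R)[0,T]` of `L_𝔭^m[0,T]`. -/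
def inBall (p T R : ℝ) {m : ℕ} (u : Fin m → ℝ → ℝ) : Prop :=
  (∀ i, MeasureTheory.MemLp (u i) (ENNReal.ofReal p) (volume.restrict (Set.Icc 0 T))) ∧
    LpVec p T u ≤ R

namespace Stmt13Aux

open Set ENNReal

lemma conj_ennreal {p q : ℝ} (hp : 1 < p) (hq : 1 < q) (hpq : 1/p + 1/q = 1) :
    1 / ENNReal.ofReal p + 1 / ENNReal.ofReal q = 1 := by
  rw [one_div, one_div, ← ENNReal.ofReal_inv_of_pos (by linarith),
    ← ENNReal.ofReal_inv_of_pos (by linarith),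
    ← ENNReal.ofReal_add (by positivity) (by positivity)]
  rw [show p⁻¹ + q⁻¹ = (1:ℝ) by rw [← one_div, ← one_div]; linarith]
  exact ENNReal.ofReal_one

lemma holder {p q T : ℝ} (hp : 1 < p) (hq : 1 < q) (hpq : 1/p + 1/q = 1)
    {f g : ℝ → ℝ}
    (hf : MemLp f (ENNReal.ofReal p) (volume.restrict (Icc 0 T)))
    (hg : MemLp g (ENNReal.ofReal q) (volume.restrict (Icc 0 T))) :
    IntegrableOn (fun t => f t * g t) (Icc 0 T) volume ∧
    ∫ t in Icc (0:ℝ) T, |f t * g t| ≤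
      (eLpNorm f (ENNReal.ofReal p) (volume.restrict (Icc 0 T))).toReal *
      (eLpNorm g (ENNReal.ofReal q) (volume.restrict (Icc 0 T))).toReal := by
  set μ := volume.restrict (Icc (0:ℝ) T)
  have hpqr : (1:ℝ≥0∞) / 1 = 1 / ENNReal.ofReal p + 1 / ENNReal.ofReal q := by
    rw [conj_ennreal hp hq hpq]; simp
  have hmem : MemLp (fun t => f t * g t) 1 μ := by
    simpa [smul_eq_mul, Pi.mul_def] using MemLp.smul hg hf (hpqr := ⟨by simpa [one_div] using hpqr.symm⟩)
  have hint : Integrable (fun t => f t * g t) μ := memLp_one_iff_integrable.mp hmem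
  refine ⟨hint, ?_⟩
  have h1 : ∫ t, |f t * g t| ∂μ = (eLpNorm (fun t => f t * g t) 1 μ).toReal := by
    rw [eLpNorm_one_eq_lintegral_enorm]
    have h0 := integral_norm_eq_lintegral_enorm hmem.1
    simp only [Real.norm_eq_abs] at h0
    exact h0
  rw [h1]
  have h2 : eLpNorm (fun t => f t * g t) 1 μ ≤
      eLpNorm f (ENNReal.ofReal p) μ * eLpNorm g (ENNReal.ofReal q) μ := by
    simpa [smul_eq_mul, Pi.mul_def] using eLpNorm_smul_le_mul_eLpNorm hg.1 hf.1 (hpqr := ⟨by simpa [one_div] using hpqr.symm⟩)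
  calc (eLpNorm (fun t => f t * g t) 1 μ).toReal
      ≤ (eLpNorm f (ENNReal.ofReal p) μ * eLpNorm g (ENNReal.ofReal q) μ).toReal :=
        ENNReal.toReal_mono (ENNReal.mul_ne_top hf.eLpNorm_ne_top hg.eLpNorm_ne_top) h2
    _ = _ := ENNReal.toReal_mul

lemma elp_toReal_le_of_bound {q T C : ℝ} (hq : 0 < q) (hT : 0 < T) (hC : 0 ≤ C)
    {f : ℝ → ℝ} (hf : ∀ t ∈ Icc (0:ℝ) T, |f t| ≤ C) :
    (eLpNorm f (ENNReal.ofReal q) (volume.restrict (Icc 0 T))).toReal ≤ C * T ^ (1/q) := by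
  have hb : ∀ᵐ t ∂(volume.restrict (Icc (0:ℝ) T)), ‖f t‖ ≤ C :=
    (ae_restrict_iff' measurableSet_Icc).2 (ae_of_all _ (by simpa [Real.norm_eq_abs] using hf))
  have h := eLpNorm_le_of_ae_bound (p := ENNReal.ofReal q) hb
  have hμ : (volume.restrict (Icc (0:ℝ) T)) Set.univ = ENNReal.ofReal T := by
    rw [Measure.restrict_apply_univ, Real.volume_Icc]; norm_num
  rw [hμ, ENNReal.toReal_ofReal hq.le] at h
  have h2 : ENNReal.ofReal T ^ q⁻¹ = ENNReal.ofReal (T ^ (1/q)) := by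
    rw [← ENNReal.ofReal_rpow_of_pos hT, one_div]
  rw [h2, ← ENNReal.ofReal_mul (by positivity)] at h
  have h3 := ENNReal.toReal_mono ENNReal.ofReal_ne_top h
  calc (eLpNorm f (ENNReal.ofReal q) (volume.restrict (Icc 0 T))).toReal
      ≤ (ENNReal.ofReal (T ^ (1/q) * C)).toReal := h3
    _ = T ^ (1/q) * C := ENNReal.toReal_ofReal (by positivity)
    _ = C * T ^ (1/q) := mul_comm _ _

lemma memℒp_of_bound {q T C : ℝ} (hT : 0 < T) {f : ℝ → ℝ}
    (hmeas : AEStronglyMeasurable f (volume.restrict (Icc (0:ℝ) T)))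
    (hf : ∀ t ∈ Icc (0:ℝ) T, |f t| ≤ C) :
    MemLp f (ENNReal.ofReal q) (volume.restrict (Icc 0 T)) := by
  refine ⟨hmeas, ?_⟩
  have hb : ∀ᵐ t ∂(volume.restrict (Icc (0:ℝ) T)), ‖f t‖ ≤ C :=
    (ae_restrict_iff' measurableSet_Icc).2 (ae_of_all _ (by simpa [Real.norm_eq_abs] using hf))
  refine lt_of_le_of_lt (eLpNorm_le_of_ae_bound hb) ?_
  exact ENNReal.mul_lt_top
    (ENNReal.rpow_lt_top_of_nonneg (by positivity)
      (by simp [Measure.restrict_apply_univ, Real.volume_Icc]))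
    ENNReal.ofReal_lt_top

lemma LqN_nonneg (q T : ℝ) {E' : Type*} [NormedAddCommGroup E'] (f : ℝ → E') :
    0 ≤ LqN q T f := ENNReal.toReal_nonneg

lemma LpVec_nonneg (p T : ℝ) {m : ℕ} (u : Fin m → ℝ → ℝ) : 0 ≤ LpVec p T u :=
  Real.iSup_nonneg fun _ => ENNReal.toReal_nonneg

lemma LqN_le_LpVec {p T : ℝ} {m : ℕ} (u : Fin m → ℝ → ℝ) (j : Fin m) :
    LqN p T (u j) ≤ LpVec p T u := by
  have h := le_ciSup (f := fun i : Fin m => LqN p T (u i))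
    (Set.Finite.bddAbove (Set.finite_range _)) j
  simpa [LpVec] using h

lemma uext_memℒp {p T R : ℝ} (hT : 0 < T) {m : ℕ} {u : Fin m → ℝ → ℝ}
    (hu : inBall p T R u) (i : Fin (m+1)) :
    MemLp (uext u i) (ENNReal.ofReal p) (volume.restrict (Icc 0 T)) := by
  haveI : IsFiniteMeasure (volume.restrict (Icc (0:ℝ) T)) :=
    ⟨by rw [Measure.restrict_apply_univ, Real.volume_Icc]; exact ENNReal.ofReal_lt_top⟩
  induction i using Fin.cases with
  | zero => simpa [uext] using memLp_const (μ := volume.restrict (Icc (0:ℝ) T)) (1:ℝ)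
  | succ j =>
      have h1 : uext u j.succ = u j := by simp [uext]
      rw [h1]; exact hu.1 j

lemma uext_norm_le {p T R : ℝ} (hp : 0 < p) (hT : 0 < T) {m : ℕ} {u : Fin m → ℝ → ℝ}
    (hu : inBall p T R u) (i : Fin (m+1)) :
    (eLpNorm (uext u i) (ENNReal.ofReal p) (volume.restrict (Icc 0 T))).toReal
      ≤ max R (T ^ (1/p)) := by
  induction i using Fin.cases with
  | zero =>
      have hb : ∀ t ∈ Icc (0:ℝ) T, |uext u 0 t| ≤ 1 := by intro t _; simp [uext]
      calc (eLpNorm (uext u 0) (ENNReal.ofReal p) (volume.restrict (Icc 0 T))).toReal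
          ≤ 1 * T ^ (1/p) := elp_toReal_le_of_bound hp hT one_pos.le hb
        _ ≤ max R (T ^ (1/p)) := by rw [one_mul]; exact le_max_right _ _
  | succ j =>
      have h1 : uext u j.succ = u j := by simp [uext]
      rw [h1]
      exact le_trans (le_trans (LqN_le_LpVec u j) hu.2) (le_max_left _ _)

lemma uextd_norm_le {p T R : ℝ} {m : ℕ} {u v : Fin m → ℝ → ℝ}
    (hu : inBall p T R u) (hv : inBall p T R v) (i : Fin (m+1)) :
    (eLpNorm (fun t => uext v i t - uext u i t) (ENNReal.ofReal p)
        (volume.restrict (Icc 0 T))).toReal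
      ≤ LpVec p T (fun j t => v j t - u j t) := by
  induction i using Fin.cases with
  | zero =>
      have h0 : (fun t => uext v 0 t - uext u 0 t) = fun _ => (0:ℝ) := by
        funext t; simp [uext]
      rw [h0, eLpNorm_zero']
      simpa using LpVec_nonneg p T (fun j t => v j t - u j t)
  | succ j =>
      have h1 : (fun t => uext v j.succ t - uext u j.succ t)
          = fun t => v j t - u j t := by funext t; simp [uext]
      rw [h1]
      exact LqN_le_LpVec (fun j t => v j t - u j t) j

lemma E_reg {m : ℕ} {p q T R : ℝ} (hp : 1 < p) (hq : 1 < q) (hpq : 1/p + 1/q = 1)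
    (hT : 0 < T) (hR : 0 < R) {u : Fin m → ℝ → ℝ} (hu : inBall p T R u) (η : Word m) :
    ContinuousOn (E u η) (Icc 0 T) ∧
      ∀ t ∈ Icc (0:ℝ) T, |E u η t| ≤ (max R (T^(1/p)) * T^(1/q)) ^ η.length := by
  induction η with
  | nil => exact ⟨continuousOn_const, by intro t _; simp [E]⟩
  | cons i η ih =>
    have hR'pos : (0:ℝ) < max R (T^(1/p)) := lt_of_lt_of_le hR (le_max_left _ _)
    have hq0 : (0:ℝ) < q := by linarith
    have hmeasη : AEStronglyMeasurable (E u η) (volume.restrict (Icc (0:ℝ) T)) :=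
      ih.1.aestronglyMeasurable measurableSet_Icc
    have hmemη : MemLp (E u η) (ENNReal.ofReal q) (volume.restrict (Icc 0 T)) :=
      memℒp_of_bound hT hmeasη ih.2
    have hnormη : (eLpNorm (E u η) (ENNReal.ofReal q) (volume.restrict (Icc 0 T))).toReal
        ≤ (max R (T^(1/p)) * T^(1/q)) ^ η.length * T^(1/q) :=
      elp_toReal_le_of_bound hq0 hT (by positivity) ih.2
    have hui := uext_memℒp hT hu i
    have huin := uext_norm_le (by linarith : (0:ℝ) < p) hT hu i
    obtain ⟨hint, hbound⟩ := holder hp hq hpq hui hmemη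
    have hcont : ContinuousOn (E u (i :: η)) (Icc 0 T) := by
      have hprim := intervalIntegral.continuousOn_primitive
          (f := fun τ => uext u i τ * E u η τ) (a := 0) (b := T) (μ := volume) hint
      refine hprim.congr fun t ht => ?_
      rw [show E u (i :: η) t = ∫ τ in (0:ℝ)..t, uext u i τ * E u η τ from rfl,
        intervalIntegral.integral_of_le ht.1]
    refine ⟨hcont, fun t ht => ?_⟩
    have hsub : Ioc (0:ℝ) t ⊆ Icc 0 T := fun x hx => ⟨hx.1.le, hx.2.trans ht.2⟩
    have habs : |E u (i::η) t| ≤ ∫ τ in Icc (0:ℝ) T, |uext u i τ * E u η τ| := by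
      rw [show E u (i :: η) t = ∫ τ in (0:ℝ)..t, uext u i τ * E u η τ from rfl,
        intervalIntegral.integral_of_le ht.1]
      calc |∫ τ in Ioc (0:ℝ) t, uext u i τ * E u η τ|
          ≤ ∫ τ in Ioc (0:ℝ) t, |uext u i τ * E u η τ| := by
            have h := norm_integral_le_integral_norm (μ := volume.restrict (Ioc (0:ℝ) t))
                (fun τ => uext u i τ * E u η τ)
            simp only [Real.norm_eq_abs] at h
            exact h
        _ ≤ ∫ τ in Icc (0:ℝ) T, |uext u i τ * E u η τ| :=
            setIntegral_mono_set hint.abs (ae_of_all _ fun x => abs_nonneg _)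
              (HasSubset.Subset.eventuallyLE hsub)
    calc |E u (i::η) t| ≤ ∫ τ in Icc (0:ℝ) T, |uext u i τ * E u η τ| := habs
      _ ≤ _ := hbound
      _ ≤ max R (T^(1/p)) * ((max R (T^(1/p)) * T^(1/q)) ^ η.length * T^(1/q)) :=
          mul_le_mul huin hnormη ENNReal.toReal_nonneg hR'pos.le
      _ = (max R (T^(1/p)) * T^(1/q)) ^ (i :: η).length := by
          rw [List.length_cons, pow_succ]; ring

lemma diff_sup_bound {m : ℕ} {p q T R : ℝ} (hp : 1 < p) (hq : 1 < q) (hpq : 1/p + 1/q = 1)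
    (hT : 0 < T) (hR : 0 < R) {u v : Fin m → ℝ → ℝ}
    (hu : inBall p T R u) (hv : inBall p T R v) (i : Fin (m+1)) (η : Word m) :
    ∀ t ∈ Icc (0:ℝ) T,
    |E v (i::η) t - E u (i::η) t| ≤
      LpVec p T (fun j t => v j t - u j t) * ((max R (T^(1/p)) * T^(1/q)) ^ η.length * T^(1/q))
      + max R (T^(1/p)) * LqN q T (fun t => E v η t - E u η t) := by
  intro t ht
  have hq0 : (0:ℝ) < q := by linarith
  have hR'pos : (0:ℝ) < max R (T^(1/p)) := lt_of_lt_of_le hR (le_max_left _ _)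
  have hregu := E_reg hp hq hpq hT hR hu η
  have hregv := E_reg hp hq hpq hT hR hv η
  have hmemuη : MemLp (E u η) (ENNReal.ofReal q) (volume.restrict (Icc 0 T)) :=
    memℒp_of_bound hT (hregu.1.aestronglyMeasurable measurableSet_Icc) hregu.2
  have hmemvη : MemLp (E v η) (ENNReal.ofReal q) (volume.restrict (Icc 0 T)) :=
    memℒp_of_bound hT (hregv.1.aestronglyMeasurable measurableSet_Icc) hregv.2
  have hmemd : MemLp (fun t => E v η t - E u η t) (ENNReal.ofReal q)
      (volume.restrict (Icc 0 T)) := hmemvη.sub hmemuη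
  have huextd : MemLp (fun t => uext v i t - uext u i t) (ENNReal.ofReal p)
      (volume.restrict (Icc 0 T)) := (uext_memℒp hT hv i).sub (uext_memℒp hT hu i)
  obtain ⟨hint1, hbd1⟩ := holder hp hq hpq huextd hmemvη
  obtain ⟨hint2, hbd2⟩ := holder hp hq hpq (uext_memℒp hT hu i) hmemd
  obtain ⟨hintv, _⟩ := holder hp hq hpq (uext_memℒp hT hv i) hmemvη
  obtain ⟨hintu, _⟩ := holder hp hq hpq (uext_memℒp hT hu i) hmemuη
  have hsub : Ioc (0:ℝ) t ⊆ Icc 0 T := fun x hx => ⟨hx.1.le, hx.2.trans ht.2⟩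
  have hEv : E v (i::η) t = ∫ τ in Ioc (0:ℝ) t, uext v i τ * E v η τ := by
    rw [show E v (i :: η) t = ∫ τ in (0:ℝ)..t, uext v i τ * E v η τ from rfl,
      intervalIntegral.integral_of_le ht.1]
  have hEu : E u (i::η) t = ∫ τ in Ioc (0:ℝ) t, uext u i τ * E u η τ := by
    rw [show E u (i :: η) t = ∫ τ in (0:ℝ)..t, uext u i τ * E u η τ from rfl,
      intervalIntegral.integral_of_le ht.1]
  have hsplit : E v (i::η) t - E u (i::η) t =
      (∫ τ in Ioc (0:ℝ) t, (uext v i τ - uext u i τ) * E v η τ)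
      + ∫ τ in Ioc (0:ℝ) t, uext u i τ * (E v η τ - E u η τ) := by
    rw [hEv, hEu, ← integral_sub (hintv.mono_set hsub) (hintu.mono_set hsub),
      ← integral_add (hint1.mono_set hsub) (hint2.mono_set hsub)]
    congr 1; funext τ; ring
  have key : ∀ (f : ℝ → ℝ), IntegrableOn f (Icc 0 T) volume →
      |∫ τ in Ioc (0:ℝ) t, f τ| ≤ ∫ τ in Icc (0:ℝ) T, |f τ| := by
    intro f hf
    calc |∫ τ in Ioc (0:ℝ) t, f τ|
        ≤ ∫ τ in Ioc (0:ℝ) t, |f τ| := by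
          have h := norm_integral_le_integral_norm (μ := volume.restrict (Ioc (0:ℝ) t)) f
          simp only [Real.norm_eq_abs] at h
          exact h
      _ ≤ ∫ τ in Icc (0:ℝ) T, |f τ| :=
          setIntegral_mono_set hf.abs (ae_of_all _ fun x => abs_nonneg _)
            (HasSubset.Subset.eventuallyLE hsub)
  have hnormvη : (eLpNorm (E v η) (ENNReal.ofReal q) (volume.restrict (Icc 0 T))).toReal
      ≤ (max R (T^(1/p)) * T^(1/q)) ^ η.length * T^(1/q) :=
    elp_toReal_le_of_bound hq0 hT (by positivity) hregv.2
  calc |E v (i::η) t - E u (i::η) t|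
      ≤ |∫ τ in Ioc (0:ℝ) t, (uext v i τ - uext u i τ) * E v η τ|
        + |∫ τ in Ioc (0:ℝ) t, uext u i τ * (E v η τ - E u η τ)| := by
        rw [hsplit]; exact abs_add_le _ _
    _ ≤ (∫ τ in Icc (0:ℝ) T, |(uext v i τ - uext u i τ) * E v η τ|)
        + ∫ τ in Icc (0:ℝ) T, |uext u i τ * (E v η τ - E u η τ)| :=
        add_le_add (key _ hint1) (key _ hint2)
    _ ≤ (eLpNorm (fun t => uext v i t - uext u i t) (ENNReal.ofReal p)
          (volume.restrict (Icc 0 T))).toReal *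
        (eLpNorm (E v η) (ENNReal.ofReal q) (volume.restrict (Icc 0 T))).toReal
        + (eLpNorm (uext u i) (ENNReal.ofReal p) (volume.restrict (Icc 0 T))).toReal *
          (eLpNorm (fun t => E v η t - E u η t) (ENNReal.ofReal q)
            (volume.restrict (Icc 0 T))).toReal := add_le_add hbd1 hbd2
    _ ≤ LpVec p T (fun j t => v j t - u j t)
          * ((max R (T^(1/p)) * T^(1/q)) ^ η.length * T^(1/q))
        + max R (T^(1/p)) * LqN q T (fun t => E v η t - E u η t) := by
        refine add_le_add (mul_le_mul (uextd_norm_le hu hv i) hnormvη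
          ENNReal.toReal_nonneg (LpVec_nonneg _ _ _)) ?_
        exact mul_le_mul_of_nonneg_right (uext_norm_le (by linarith) hT hu i)
          ENNReal.toReal_nonneg

end Stmt13Aux

open Stmt13Aux Set
/-- For conjugate exponents `𝔭,𝔮 ∈ (1,∞)`, every word `η` and all
`R,T > 0`, the map `u ↦ E_η[u]` from the ball `B_𝔭^m(R)[0,T]` to `L_𝔮[0,T]` is
continuous with respect to the `L_𝔭` and `L_𝔮` norms. -/
theorem stmt13 {m : ℕ} (p q T R : ℝ) (hp : 1 < p) (hpq : 1 / p + 1 / q = 1)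
    (hT : 0 < T) (hR : 0 < R) (η : Word m)
    (u : Fin m → ℝ → ℝ) (hu : inBall p T R u) (ε : ℝ) (hε : 0 < ε) :
    ∃ δ > 0, ∀ v : Fin m → ℝ → ℝ, inBall p T R v →
      LpVec p T (fun j t => v j t - u j t) < δ →
      LqN q T (fun t => E v η t - E u η t) < ε := by
  have hp0 : 0 < p := by linarith
  have h1p : 1/p < 1 := by rw [div_lt_one hp0]; exact hp
  have h1p0 : 0 < 1/p := by positivity
  have hq0 : 0 < q := by
    by_contra h
    push_neg at h
    have : 1/q ≤ 0 := one_div_nonpos.mpr h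
    linarith
  have hq : 1 < q := by
    have h1q : 1/q < 1 := by linarith
    rwa [div_lt_one hq0] at h1q
  induction η generalizing ε with
  | nil =>
      refine ⟨1, one_pos, fun v hv hd => ?_⟩
      have h0 : (fun t => E v [] t - E u [] t) = fun _ => (0:ℝ) := by
        funext t; simp [E]
      rw [h0]
      unfold LqN
      rw [eLpNorm_zero']
      simpa using hε
  | cons i η ih =>
      have hR'pos : (0:ℝ) < max R (T^(1/p)) := lt_of_lt_of_le hR (le_max_left _ _)
      have hTq : (0:ℝ) < T^(1/q) := by positivity
      have hC1pos : (0:ℝ) < (max R (T^(1/p)) * T^(1/q)) ^ η.length * T^(1/q) := by positivity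
      set R' := max R (T^(1/p)) with hR'def
      set C1 := (R' * T^(1/q)) ^ η.length * T^(1/q) with hC1def
      obtain ⟨δ₁, hδ₁, H₁⟩ := ih (ε / (2 * T^(1/q) * R')) (by positivity)
      refine ⟨min δ₁ (ε / (2 * T^(1/q) * C1)), lt_min hδ₁ (by positivity),
        fun v hv hd => ?_⟩
      have hd1 : LpVec p T (fun j t => v j t - u j t) < δ₁ :=
        lt_of_lt_of_le hd (min_le_left _ _)
      have hd2 : LpVec p T (fun j t => v j t - u j t) < ε / (2 * T^(1/q) * C1) :=
        lt_of_lt_of_le hd (min_le_right _ _)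
      have hIH := H₁ v hv hd1
      have hδ'0 : 0 ≤ LpVec p T (fun j t => v j t - u j t) := LpVec_nonneg _ _ _
      have hL0 : 0 ≤ LqN q T (fun t => E v η t - E u η t) := LqN_nonneg _ _ _
      have hkey : LqN q T (fun t => E v (i::η) t - E u (i::η) t) ≤
          (LpVec p T (fun j t => v j t - u j t) * C1
            + R' * LqN q T (fun t => E v η t - E u η t)) * T^(1/q) :=
        elp_toReal_le_of_bound hq0 hT (by positivity)
          (diff_sup_bound hp hq hpq hT hR hu hv i η)
      have hd2' : LpVec p T (fun j t => v j t - u j t) * (2 * T^(1/q) * C1) < ε :=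
        (lt_div_iff₀ (by positivity)).mp hd2
      have hIH' : LqN q T (fun t => E v η t - E u η t) * (2 * T^(1/q) * R') < ε :=
        (lt_div_iff₀ (by positivity)).mp hIH
      nlinarith [hkey, hd2', hIH', hδ'0, hL0, hTq, hC1pos, hR'pos]
end
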